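/- arXiv:2002.09241 — 3 statements merged into one kernel-verified Lean document; each statement's English description precedes it below -/
import Mathlib

section
/- A length exact category E is abelian (with the standard exact structure) if and only if simp(E) is a semibrick, i.e., every morphism between simple objects of E is zero or an isomorphism. -/
open CategoryTheory CategoryTheory.Limits

universe v u

/-- A Quillen exact structure on an additive category `E`: a class of
kernel-cokernel pairs ("conflations"), closed under isomorphisms, containing
the trivial conflations, with inflations and deflations closed under
composition, pushouts of inflations and pullbacks of deflations existing and
again inflations/deflations. -/
structure ExactStruct (E : Type u) [Category.{v} E] [HasZeroMorphisms E] where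
  conf : ∀ ⦃X Y Z : E⦄, (X ⟶ Y) → (Y ⟶ Z) → Prop
  conf_comp : ∀ ⦃X Y Z : E⦄ {f : X ⟶ Y} {g : Y ⟶ Z}, conf f g → f ≫ g = 0
  conf_isKernel : ∀ ⦃X Y Z : E⦄ {f : X ⟶ Y} {g : Y ⟶ Z} (h : conf f g),
    Nonempty (IsLimit (KernelFork.ofι f (conf_comp h)))
  conf_isCokernel : ∀ ⦃X Y Z : E⦄ {f : X ⟶ Y} {g : Y ⟶ Z} (h : conf f g),
    Nonempty (IsColimit (CokernelCofork.ofπ g (conf_comp h)))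
  conf_iso : ∀ ⦃X Y Z X' Y' Z' : E⦄ {f : X ⟶ Y} {g : Y ⟶ Z} {f' : X' ⟶ Y'} {g' : Y' ⟶ Z'}
    (α : X ≅ X') (β : Y ≅ Y') (γ : Z ≅ Z'),
    conf f g → f ≫ β.hom = α.hom ≫ f' → g ≫ γ.hom = β.hom ≫ g' → conf f' g'
  conf_id_left : ∀ (X Z : E), IsZero Z → conf (𝟙 X) (0 : X ⟶ Z)
  conf_id_right : ∀ (Z X : E), IsZero Z → conf (0 : Z ⟶ X) (𝟙 X)
  infl_comp : ∀ ⦃X Y W : E⦄ {f : X ⟶ Y} {f' : Y ⟶ W},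
    (∃ (Z : E) (g : Y ⟶ Z), conf f g) → (∃ (Z : E) (g : W ⟶ Z), conf f' g) →
    ∃ (Z : E) (g : W ⟶ Z), conf (f ≫ f') g
  defl_comp : ∀ ⦃X Y W : E⦄ {g : X ⟶ Y} {g' : Y ⟶ W},
    (∃ (Z : E) (f : Z ⟶ X), conf f g) → (∃ (Z : E) (f : Z ⟶ Y), conf f g') →
    ∃ (Z : E) (f : Z ⟶ X), conf f (g ≫ g')
  infl_pushout : ∀ ⦃X Y X' : E⦄ (f : X ⟶ Y) (t : X ⟶ X'),
    (∃ (Z : E) (g : Y ⟶ Z), conf f g) →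
    ∃ (P : E) (inl : Y ⟶ P) (inr : X' ⟶ P),
      IsPushout f t inl inr ∧ ∃ (Z : E) (g : P ⟶ Z), conf inr g
  defl_pullback : ∀ ⦃Y Z T : E⦄ (d : Y ⟶ Z) (t : T ⟶ Z),
    (∃ (X : E) (f : X ⟶ Y), conf f d) →
    ∃ (P : E) (p1 : P ⟶ Y) (p2 : P ⟶ T),
      IsPullback p1 p2 d t ∧ ∃ (X : E) (f : X ⟶ P), conf f p2

namespace ExactStruct

variable {E : Type u} [Category.{v} E] [HasZeroMorphisms E]

/-- `f` is an inflation (admissible monic): the first map of some conflation. -/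
def Inflation (S : ExactStruct E) {X Y : E} (f : X ⟶ Y) : Prop :=
  ∃ (Z : E) (g : Y ⟶ Z), S.conf f g

/-- `g` is a deflation (admissible epic): the second map of some conflation. -/
def Deflation (S : ExactStruct E) {Y Z : E} (g : Y ⟶ Z) : Prop :=
  ∃ (X : E) (f : X ⟶ Y), S.conf f g

end ExactStruct

/-- `FiltLenP conf C n X` : `X` admits a `C`-filtration of length `n` w.r.t. the
conflation class `conf`, i.e. a chain of inflations `0 = X₀ ↣ ⋯ ↣ Xₙ = X` whose
successive cokernels lie in `C`. -/
inductive FiltLenP {E : Type u} [Category.{v} E]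
    (conf : ∀ ⦃X Y Z : E⦄, (X ⟶ Y) → (Y ⟶ Z) → Prop) (C : Set E) : ℕ → E → Prop
  | zero (X : E) : IsZero X → FiltLenP conf C 0 X
  | step {X Y c : E} (n : ℕ) (f : X ⟶ Y) (g : Y ⟶ c) :
      FiltLenP conf C n X → c ∈ C → conf f g → FiltLenP conf C (n + 1) Y

namespace ExactStruct

variable {E : Type u} [Category.{v} E] [HasZeroMorphisms E]

/-- `Filt C` : the objects admitting a finite `C`-filtration. -/
def Filt (S : ExactStruct E) (C : Set E) : Set E :=
  {X | ∃ n, FiltLenP S.conf C n X}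

/-- The conflations of the exact structure induced on the subcategory `W`. -/
def confIn (S : ExactStruct E) (W : Set E) :
    ∀ ⦃X Y Z : E⦄, (X ⟶ Y) → (Y ⟶ Z) → Prop :=
  fun X Y Z f g => S.conf f g ∧ X ∈ W ∧ Y ∈ W ∧ Z ∈ W

/-- A simple object of the exact category `E`. -/
def Simple (S : ExactStruct E) (M : E) : Prop :=
  ¬ IsZero M ∧ ∀ ⦃L N : E⦄ (f : L ⟶ M) (g : M ⟶ N), S.conf f g → IsZero L ∨ IsZero N

/-- A simple object of the extension-closed subcategory `W` with its induced
exact structure. -/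
def SimpleIn (S : ExactStruct E) (W : Set E) (M : E) : Prop :=
  M ∈ W ∧ ¬ IsZero M ∧
    ∀ ⦃L N : E⦄ (f : L ⟶ M) (g : M ⟶ N), S.confIn W f g → IsZero L ∨ IsZero N

/-- `E` is a length exact category: every object has a finite filtration with
simple subquotients. -/
def IsLength (S : ExactStruct E) : Prop :=
  ∀ X : E, ∃ n, FiltLenP S.conf {M | S.Simple M} n X

/-- The subcategory `W` (with its induced exact structure) is length. -/
def IsLengthIn (S : ExactStruct E) (W : Set E) : Prop :=
  ∀ X ∈ W, ∃ n, FiltLenP (S.confIn W) {M | S.SimpleIn W M} n X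

/-- The inclusion of the full subcategory `W` into `E` is exact: every short
exact sequence in (the abelian category) `W` is a conflation of `E`. -/
def InclusionExact (S : ExactStruct E) (W : Set E)
    [Abelian (ObjectProperty.FullSubcategory fun X => X ∈ W)] : Prop :=
  ∀ (A B C : ObjectProperty.FullSubcategory fun X => X ∈ W) (f : A ⟶ B) (g : B ⟶ C)
    (w : f ≫ g = 0), (ShortComplex.mk f g w).ShortExact → S.conf f.hom g.hom

/-- `W` is a wide subcategory of `E`: closed under extensions, abelian, and the
inclusion is exact. -/
def IsWide (S : ExactStruct E) (W : Set E) : Prop :=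
  (∀ ⦃X Y Z : E⦄ (f : X ⟶ Y) (g : Y ⟶ Z), S.conf f g → X ∈ W → Z ∈ W → Y ∈ W) ∧
  ∃ inst : Abelian (ObjectProperty.FullSubcategory fun X => X ∈ W),
    @InclusionExact E _ _ S W inst

end ExactStruct

/-- A brick: a nonzero object all of whose nonzero endomorphisms are
isomorphisms (i.e. the endomorphism ring is a division ring). -/
def Brick {E : Type u} [Category.{v} E] [HasZeroMorphisms E] (X : E) : Prop :=
  𝟙 X ≠ 0 ∧ ∀ f : X ⟶ X, f ≠ 0 → IsIso f

/-- A semibrick: a set of bricks which are pairwise Hom-orthogonal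
(no nonzero morphisms between non-isomorphic members). -/
def Semibrick {E : Type u} [Category.{v} E] [HasZeroMorphisms E] (𝒮 : Set E) : Prop :=
  (∀ X ∈ 𝒮, Brick X) ∧
  ∀ X ∈ 𝒮, ∀ Y ∈ 𝒮, IsEmpty (X ≅ Y) → ∀ f : X ⟶ Y, f = 0

/-- A class of objects closed under isomorphisms. -/
def IsoClosed {E : Type u} [Category.{v} E] (C : Set E) : Prop :=
  ∀ X Y : E, Nonempty (X ≅ Y) → X ∈ C → Y ∈ C

/-- Composite of a chain of morphisms `obj i ⟶ obj (i+1)`. -/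
def comps {E : Type u} [Category.{v} E] (obj : ℕ → E)
    (ι : ∀ i, obj i ⟶ obj (i + 1)) (i : ℕ) : ∀ j, obj i ⟶ obj (i + j)
  | 0 => 𝟙 _
  | j + 1 => comps obj ι i j ≫ ι (i + j)

/-! ### Helper lemmas -/

namespace SchurHelpers

open ExactStruct

variable {E : Type u} [Category.{v} E] [pe : Preadditive E] {S : ExactStruct E}

lemma conf_mono {X Y Z : E} {f : X ⟶ Y} {g : Y ⟶ Z} (h : S.conf f g) : Mono f :=
  mono_of_isLimit_fork (S.conf_isKernel h).some

lemma conf_epi {X Y Z : E} {f : X ⟶ Y} {g : Y ⟶ Z} (h : S.conf f g) : Epi g :=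
  epi_of_isColimit_cofork (S.conf_isCokernel h).some

lemma conf_lift {X Y Z W : E} {f : X ⟶ Y} {g : Y ⟶ Z} (h : S.conf f g) (t : W ⟶ Y)
    (ht : t ≫ g = 0) : ∃ l : W ⟶ X, l ≫ f = t := by
  obtain ⟨l, hl⟩ := KernelFork.IsLimit.lift' (S.conf_isKernel h).some t ht
  exact ⟨l, hl⟩

lemma conf_desc {X Y Z W : E} {f : X ⟶ Y} {g : Y ⟶ Z} (h : S.conf f g) (t : Y ⟶ W)
    (ht : f ≫ t = 0) : ∃ l : Z ⟶ W, g ≫ l = t := by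
  obtain ⟨l, hl⟩ := CokernelCofork.IsColimit.desc' (S.conf_isCokernel h).some t ht
  exact ⟨l, hl⟩

/-- Transport a conflation along another cokernel of the same inflation. -/
lemma conf_of_cokernel {X Y Z Z' : E} {f : X ⟶ Y} {g : Y ⟶ Z} (h : S.conf f g)
    (g' : Y ⟶ Z') (h0 : f ≫ g' = 0)
    (hfac : ∀ {W : E} (t : Y ⟶ W), f ≫ t = 0 → ∃ v : Z' ⟶ W, g' ≫ v = t)
    (hepi : Epi g') : S.conf f g' := by
  obtain ⟨a, ha⟩ := conf_desc h g' h0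
  obtain ⟨b, hb⟩ := hfac g (S.conf_comp h)
  have hab : a ≫ b = 𝟙 Z := by
    have := conf_epi h
    rw [← cancel_epi g, ← Category.assoc, ha, hb, Category.comp_id]
  have hba : b ≫ a = 𝟙 Z' := by
    rw [← cancel_epi g', ← Category.assoc, hb, ha, Category.comp_id]
  exact S.conf_iso (Iso.refl X) (Iso.refl Y) ⟨a, b, hab, hba⟩ h (by simp)
    (by simpa using ha)

/-- Transport a conflation along another kernel of the same deflation. -/
lemma conf_of_kernel {X X' Y Z : E} {f : X ⟶ Y} {g : Y ⟶ Z} (h : S.conf f g)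
    (f' : X' ⟶ Y) (h0 : f' ≫ g = 0)
    (hfac : ∀ {W : E} (t : W ⟶ Y), t ≫ g = 0 → ∃ v : W ⟶ X', v ≫ f' = t)
    (hmono : Mono f') : S.conf f' g := by
  obtain ⟨a, ha⟩ := conf_lift h f' h0
  obtain ⟨b, hb⟩ := hfac f (S.conf_comp h)
  have hba : b ≫ a = 𝟙 X := by
    have := conf_mono h
    rw [← cancel_mono f, Category.assoc, ha, hb, Category.id_comp]
  have hab : a ≫ b = 𝟙 X' := by
    rw [← cancel_mono f', Category.assoc, hb, ha, Category.id_comp]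
  exact S.conf_iso ⟨b, a, hba, hab⟩ (Iso.refl Y) (Iso.refl Z) h
    (by simpa using hb.symm) (by simp)

lemma inflation_of_isIso [HasZeroObject E] {X Y : E} (f : X ⟶ Y) [IsIso f] :
    S.Inflation f := by
  obtain ⟨O, hO⟩ := HasZeroObject.zero (C := E)
  refine ⟨O, 0, S.conf_iso (Iso.refl X) (asIso f) (Iso.refl O)
    (S.conf_id_left X O hO) (by simp) (by simp)⟩

lemma deflation_of_isIso [HasZeroObject E] {X Y : E} (f : X ⟶ Y) [IsIso f] :
    S.Deflation f := by
  obtain ⟨O, hO⟩ := HasZeroObject.zero (C := E)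
  refine ⟨O, 0, S.conf_iso (Iso.refl O) (Iso.refl X) (asIso f)
    (S.conf_id_right O X hO) (by simp) (by simp)⟩

lemma Inflation.comp {X Y Z : E} {f : X ⟶ Y} {g : Y ⟶ Z} (hf : S.Inflation f)
    (hg : S.Inflation g) : S.Inflation (f ≫ g) := S.infl_comp hf hg

lemma Deflation.comp {X Y Z : E} {f : X ⟶ Y} {g : Y ⟶ Z} (hf : S.Deflation f)
    (hg : S.Deflation g) : S.Deflation (f ≫ g) := S.defl_comp hf hg

lemma inflation_comp_isIso [HasZeroObject E] {X Y Z : E} {f : X ⟶ Y} (e : Y ⟶ Z)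
    (hf : S.Inflation f) [IsIso e] : S.Inflation (f ≫ e) :=
  Inflation.comp hf (inflation_of_isIso e)

lemma isIso_comp_inflation [HasZeroObject E] {X Y Z : E} (e : X ⟶ Y) {f : Y ⟶ Z}
    (hf : S.Inflation f) [IsIso e] : S.Inflation (e ≫ f) :=
  Inflation.comp (inflation_of_isIso e) hf

lemma deflation_comp_isIso [HasZeroObject E] {X Y Z : E} {f : X ⟶ Y} (e : Y ⟶ Z)
    (hf : S.Deflation f) [IsIso e] : S.Deflation (f ≫ e) :=
  Deflation.comp hf (deflation_of_isIso e)

lemma isIso_comp_deflation [HasZeroObject E] {X Y Z : E} (e : X ⟶ Y) {f : Y ⟶ Z}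
    (hf : S.Deflation f) [IsIso e] : S.Deflation (e ≫ f) :=
  Deflation.comp (deflation_of_isIso e) hf

lemma conf_isIso_of_mono {K X D : E} {k : K ⟶ X} {d : X ⟶ D} (h : S.conf k d)
    (hm : Mono d) : IsIso d := by
  have hk0 : k = 0 := by
    rw [← cancel_mono d, S.conf_comp h, zero_comp]
  obtain ⟨l, hl⟩ := conf_desc h (𝟙 X) (by rw [hk0, zero_comp])
  have he : Epi d := conf_epi h
  refine ⟨l, hl, ?_⟩
  rw [← cancel_epi d, ← Category.assoc, hl, Category.id_comp, Category.comp_id]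

lemma conf_isIso_of_epi {K X D : E} {k : K ⟶ X} {d : X ⟶ D} (h : S.conf k d)
    (he : Epi k) : IsIso k := by
  have hd0 : d = 0 := by
    rw [← cancel_epi k, S.conf_comp h, comp_zero]
  obtain ⟨l, hl⟩ := conf_lift h (𝟙 X) (by rw [hd0, comp_zero])
  have hm : Mono k := conf_mono h
  refine ⟨l, ?_, hl⟩
  rw [← cancel_mono k, Category.assoc, hl, Category.comp_id, Category.id_comp]

end SchurHelpers

namespace SchurHelpers

open ExactStruct

variable {E : Type u} [Category.{v} E] [pe : Preadditive E] {S : ExactStruct E}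

section Biprod

variable [HasZeroObject E] [HasBinaryBiproducts E]

lemma inflation_biprod_inl (A B : E) : S.Inflation (biprod.inl : A ⟶ A ⊞ B) := by
  obtain ⟨O, hO⟩ := HasZeroObject.zero (C := E)
  obtain ⟨P, inl, inr, hpo, hinr⟩ := S.infl_pushout (0 : O ⟶ B) (0 : O ⟶ A)
    ⟨B, 𝟙 B, S.conf_id_right O B hO⟩
  have w : (0 : O ⟶ B) ≫ (biprod.inr : B ⟶ A ⊞ B) = (0 : O ⟶ A) ≫ biprod.inl := by simp
  set φ : P ⟶ A ⊞ B := hpo.desc biprod.inr biprod.inl w with hφ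
  have h1 : inl ≫ φ = biprod.inr := hpo.inl_desc _ _ _
  have h2 : inr ≫ φ = biprod.inl := hpo.inr_desc _ _ _
  set ψ : A ⊞ B ⟶ P := biprod.desc inr inl with hψ
  haveI : IsIso φ := by
    refine ⟨ψ, ?_, ?_⟩
    · apply hpo.hom_ext
      · rw [← Category.assoc, h1, Category.comp_id]; simp [hψ]
      · rw [← Category.assoc, h2, Category.comp_id]; simp [hψ]
    · apply biprod.hom_ext' <;> simp [hψ, h1, h2]
  rw [← h2]
  exact inflation_comp_isIso φ hinr

lemma inflation_biprod_inr (A B : E) : S.Inflation (biprod.inr : B ⟶ A ⊞ B) := by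
  obtain ⟨O, hO⟩ := HasZeroObject.zero (C := E)
  obtain ⟨P, inl, inr, hpo, hinr⟩ := S.infl_pushout (0 : O ⟶ A) (0 : O ⟶ B)
    ⟨A, 𝟙 A, S.conf_id_right O A hO⟩
  have w : (0 : O ⟶ A) ≫ (biprod.inl : A ⟶ A ⊞ B) = (0 : O ⟶ B) ≫ biprod.inr := by simp
  set φ : P ⟶ A ⊞ B := hpo.desc biprod.inl biprod.inr w with hφ
  have h1 : inl ≫ φ = biprod.inl := hpo.inl_desc _ _ _
  have h2 : inr ≫ φ = biprod.inr := hpo.inr_desc _ _ _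
  set ψ : A ⊞ B ⟶ P := biprod.desc inl inr with hψ
  haveI : IsIso φ := by
    refine ⟨ψ, ?_, ?_⟩
    · apply hpo.hom_ext
      · rw [← Category.assoc, h1, Category.comp_id]; simp [hψ]
      · rw [← Category.assoc, h2, Category.comp_id]; simp [hψ]
    · apply biprod.hom_ext' <;> simp [hψ, h1, h2]
  rw [← h2]
  exact inflation_comp_isIso φ hinr

lemma deflation_biprod_fst (A B : E) : S.Deflation (biprod.fst : A ⊞ B ⟶ A) := by
  obtain ⟨O, hO⟩ := HasZeroObject.zero (C := E)
  obtain ⟨P, p1, p2, hpb, hdp2⟩ := S.defl_pullback (0 : B ⟶ O) (0 : A ⟶ O)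
    ⟨B, 𝟙 B, S.conf_id_left B O hO⟩
  have w : (biprod.snd : A ⊞ B ⟶ B) ≫ (0 : B ⟶ O) = biprod.fst ≫ (0 : A ⟶ O) := by simp
  set ρ : A ⊞ B ⟶ P := hpb.lift biprod.snd biprod.fst w with hρ
  have h1 : ρ ≫ p1 = biprod.snd := hpb.lift_fst _ _ _
  have h2 : ρ ≫ p2 = biprod.fst := hpb.lift_snd _ _ _
  set σ : P ⟶ A ⊞ B := biprod.lift p2 p1 with hσ
  haveI : IsIso ρ := by
    refine ⟨σ, ?_, ?_⟩
    · apply biprod.hom_ext <;> simp [hσ, h1, h2]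
    · apply hpb.hom_ext
      · rw [Category.assoc, h1, Category.id_comp]; simp [hσ]
      · rw [Category.assoc, h2, Category.id_comp]; simp [hσ]
  rw [← h2]
  exact isIso_comp_deflation ρ hdp2

lemma deflation_biprod_snd (A B : E) : S.Deflation (biprod.snd : A ⊞ B ⟶ B) := by
  obtain ⟨O, hO⟩ := HasZeroObject.zero (C := E)
  obtain ⟨P, p1, p2, hpb, hdp2⟩ := S.defl_pullback (0 : A ⟶ O) (0 : B ⟶ O)
    ⟨A, 𝟙 A, S.conf_id_left A O hO⟩
  have w : (biprod.fst : A ⊞ B ⟶ A) ≫ (0 : A ⟶ O) = biprod.snd ≫ (0 : B ⟶ O) := by simp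
  set ρ : A ⊞ B ⟶ P := hpb.lift biprod.fst biprod.snd w with hρ
  have h1 : ρ ≫ p1 = biprod.fst := hpb.lift_fst _ _ _
  have h2 : ρ ≫ p2 = biprod.snd := hpb.lift_snd _ _ _
  set σ : P ⟶ A ⊞ B := biprod.lift p1 p2 with hσ
  haveI : IsIso ρ := by
    refine ⟨σ, ?_, ?_⟩
    · apply biprod.hom_ext <;> simp [hσ, h1, h2]
    · apply hpb.hom_ext
      · rw [Category.assoc, h1, Category.id_comp]; simp [hσ]
      · rw [Category.assoc, h2, Category.id_comp]; simp [hσ]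
  rw [← h2]
  exact isIso_comp_deflation ρ hdp2

end Biprod

/-- A conflation with a section of the inflation-side kernel `i` splits. -/
lemma splitting_of_section {A X C' : E} {i : A ⟶ X} {p : X ⟶ C'} (hip : i ≫ p = 0)
    (hmono : Mono i)
    (hfac : ∀ {V : E} (z : V ⟶ X), z ≫ p = 0 → ∃ w : V ⟶ A, w ≫ i = z)
    {s : C' ⟶ X} (hs : s ≫ p = 𝟙 C') :
    ∃ r : X ⟶ A, i ≫ r = 𝟙 A ∧ s ≫ r = 0 ∧ r ≫ i + p ≫ s = 𝟙 X := by
  obtain ⟨r, hr⟩ := hfac (𝟙 X - p ≫ s)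
    (by rw [Preadditive.sub_comp, Category.id_comp, Category.assoc, hs, Category.comp_id,
      sub_self])
  refine ⟨r, ?_, ?_, ?_⟩
  · rw [← cancel_mono i, Category.assoc, hr, Preadditive.comp_sub, Category.comp_id,
      ← Category.assoc, hip, zero_comp, sub_zero, Category.id_comp]
  · rw [← cancel_mono i, Category.assoc, hr, Preadditive.comp_sub, Category.comp_id,
      ← Category.assoc, hs, Category.id_comp, sub_self, zero_comp]
  · rw [hr]; abel

lemma cosplitting_of_retraction {M Q T : E} {m : M ⟶ Q} {π : Q ⟶ T} (hmp : m ≫ π = 0)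
    (hepi : Epi π)
    (hfac : ∀ {V : E} (w : Q ⟶ V), m ≫ w = 0 → ∃ v : T ⟶ V, π ≫ v = w)
    {u : Q ⟶ M} (hu : m ≫ u = 𝟙 M) :
    ∃ s : T ⟶ Q, s ≫ π = 𝟙 T ∧ s ≫ u = 0 ∧ u ≫ m + π ≫ s = 𝟙 Q := by
  obtain ⟨s, hs⟩ := hfac (𝟙 Q - u ≫ m)
    (by rw [Preadditive.comp_sub, Category.comp_id, ← Category.assoc, hu, Category.id_comp,
      sub_self])
  refine ⟨s, ?_, ?_, ?_⟩
  · rw [← cancel_epi π, ← Category.assoc, hs, Preadditive.sub_comp, Category.id_comp,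
      Category.assoc, hmp, comp_zero, sub_zero, Category.comp_id]
  · rw [← cancel_epi π, ← Category.assoc, hs, Preadditive.sub_comp, Category.id_comp,
      Category.assoc, hu, Category.comp_id, sub_self, comp_zero]
  · rw [hs]; abel

/-- The cokernel of the pushout of an inflation. -/
lemma pushout_cokernel {A X T B P : E} {f : A ⟶ X} {c : X ⟶ T} {t : A ⟶ B}
    {a : X ⟶ P} {b : B ⟶ P} (hpo : IsPushout f t a b) (hc : S.conf f c) :
    ∃ πP : P ⟶ T, a ≫ πP = c ∧ b ≫ πP = 0 ∧
      (∀ {V : E} (w : P ⟶ V), b ≫ w = 0 → ∃ v : T ⟶ V, πP ≫ v = w) ∧ Epi πP := by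
  have w0 : f ≫ c = t ≫ (0 : B ⟶ T) := by rw [S.conf_comp hc, comp_zero]
  refine ⟨hpo.desc c 0 w0, hpo.inl_desc _ _ _, hpo.inr_desc _ _ _, ?_, ?_⟩
  · intro V w hw
    have h0 : f ≫ (a ≫ w) = 0 := by
      rw [← Category.assoc, hpo.w, Category.assoc, hw, comp_zero]
    obtain ⟨v, hv⟩ := conf_desc hc (a ≫ w) h0
    refine ⟨v, hpo.hom_ext ?_ ?_⟩
    · rw [← Category.assoc, hpo.inl_desc, hv]
    · rw [← Category.assoc, hpo.inr_desc, zero_comp, hw]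
  · have : Epi (a ≫ hpo.desc c 0 w0) := by rw [hpo.inl_desc]; exact conf_epi hc
    exact epi_of_epi a _

/-- The kernel of the pullback of a deflation. -/
lemma pullback_kernel {K Y Cc T P : E} {k : K ⟶ Y} {d : Y ⟶ Cc} {t : T ⟶ Cc}
    {p1 : P ⟶ Y} {p2 : P ⟶ T} (hpb : IsPullback p1 p2 d t) (hk : S.conf k d) :
    ∃ k' : K ⟶ P, k' ≫ p1 = k ∧ k' ≫ p2 = 0 ∧
      (∀ {V : E} (z : V ⟶ P), z ≫ p2 = 0 → ∃ w : V ⟶ K, w ≫ k' = z) ∧ Mono k' := by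
  have w0 : k ≫ d = (0 : K ⟶ T) ≫ t := by rw [S.conf_comp hk, zero_comp]
  refine ⟨hpb.lift k 0 w0, hpb.lift_fst _ _ _, hpb.lift_snd _ _ _, ?_, ?_⟩
  · intro V z hz
    have h0 : (z ≫ p1) ≫ d = 0 := by
      rw [Category.assoc, hpb.w, ← Category.assoc, hz, zero_comp]
    obtain ⟨w, hw⟩ := conf_lift hk (z ≫ p1) h0
    refine ⟨w, hpb.hom_ext ?_ ?_⟩
    · rw [Category.assoc, hpb.lift_fst, hw]
    · rw [Category.assoc, hpb.lift_snd, comp_zero, hz]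
  · have : Mono (hpb.lift k 0 w0 ≫ p1) := by rw [hpb.lift_fst]; exact conf_mono hk
    exact mono_of_mono _ p1

end SchurHelpers
namespace SchurHelpers

open ExactStruct

variable {E : Type u} [Category.{v} E] [pe : Preadditive E] {S : ExactStruct E}
variable [HasZeroObject E] [HasBinaryBiproducts E]

/-- Pushout of a deflation `d` along an inflation `j` (with matching domain),
constructed explicitly as `X / K` where `K = ker d`. -/
lemma pushout_defl_infl {A X T K I : E} {j : A ⟶ X} {p : X ⟶ T} (hjp : S.conf j p)
    {e : K ⟶ A} {d : A ⟶ I} (hed : S.conf e d) :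
    ∃ (Q : E) (q : X ⟶ Q) (m : I ⟶ Q) (πQ : Q ⟶ T),
      S.conf (e ≫ j) q ∧ d ≫ m = j ≫ q ∧ S.conf m πQ ∧ q ≫ πQ = p ∧
      ∀ {W : E} (a : X ⟶ W) (b : I ⟶ W), j ≫ a = d ≫ b →
        ∃ u : Q ⟶ W, q ≫ u = a ∧ m ≫ u = b := by
  obtain ⟨Q, q, hq⟩ := S.infl_comp ⟨_, _, hed⟩ ⟨_, _, hjp⟩
  have hEq : Epi q := conf_epi hq
  have hEd : Epi d := conf_epi hed
  have hEp : Epi p := conf_epi hjp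
  obtain ⟨m, hm⟩ := conf_desc hed (j ≫ q)
    (by rw [← Category.assoc]; exact S.conf_comp hq)
  -- universal property
  have puniv : ∀ {W : E} (a : X ⟶ W) (b : I ⟶ W), j ≫ a = d ≫ b →
      ∃ u : Q ⟶ W, q ≫ u = a ∧ m ≫ u = b := by
    intro W a b hab
    obtain ⟨u, hu⟩ := conf_desc hq a
      (by rw [Category.assoc, hab, ← Category.assoc, S.conf_comp hed, zero_comp])
    refine ⟨u, hu, ?_⟩
    rw [← cancel_epi d, ← Category.assoc, hm, Category.assoc, hu, hab]
  -- m is an inflation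
  obtain ⟨P, inl, inr, hpo, hinr⟩ := S.infl_pushout j d ⟨_, _, hjp⟩
  have hminfl : S.Inflation m := by
    set φ : P ⟶ Q := hpo.desc q m hm.symm with hφ
    have h1 : inl ≫ φ = q := hpo.inl_desc _ _ _
    have h2 : inr ≫ φ = m := hpo.inr_desc _ _ _
    obtain ⟨ψ, hψ1, hψ2⟩ := puniv inl inr hpo.w
    haveI : IsIso φ := by
      refine ⟨ψ, ?_, ?_⟩
      · apply hpo.hom_ext
        · rw [← Category.assoc, h1, hψ1, Category.comp_id]
        · rw [← Category.assoc, h2, hψ2, Category.comp_id]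
      · rw [← cancel_epi q, ← Category.assoc, hψ1, h1, Category.comp_id]
    rw [← h2]
    exact inflation_comp_isIso φ hinr
  -- the cokernel of m
  obtain ⟨πQ, hπQ⟩ := conf_desc hq p
    (by rw [Category.assoc, S.conf_comp hjp, comp_zero])
  have hmπ : m ≫ πQ = 0 := by
    rw [← cancel_epi d, ← Category.assoc, hm, Category.assoc, hπQ, S.conf_comp hjp, comp_zero]
  have hfacπ : ∀ {V : E} (w : Q ⟶ V), m ≫ w = 0 → ∃ v : T ⟶ V, πQ ≫ v = w := by
    intro V w hw
    have h0 : j ≫ (q ≫ w) = 0 := by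
      rw [← Category.assoc, ← hm, Category.assoc, hw, comp_zero]
    obtain ⟨v, hv⟩ := conf_desc hjp (q ≫ w) h0
    refine ⟨v, ?_⟩
    rw [← cancel_epi q, ← Category.assoc, hπQ, hv]
  have hEπQ : Epi πQ := by
    have : Epi (q ≫ πQ) := by rw [hπQ]; exact hEp
    exact epi_of_epi q πQ
  obtain ⟨Z, z, hz⟩ := hminfl
  exact ⟨Q, q, m, πQ, hq, hm, conf_of_cokernel hz πQ hmπ hfacπ hEπQ, hπQ, puniv⟩

/-- Short five lemma with identity outer maps. -/
lemma shortFive {A W C' Y : E} {i : A ⟶ W} {p : W ⟶ C'} (hip : S.conf i p)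
    {g : A ⟶ Y} {π : Y ⟶ C'} (hgp : S.conf g π)
    {u : W ⟶ Y} (hiu : i ≫ u = g) (hup : u ≫ π = p) : IsIso u := by
  have hEp : Epi p := conf_epi hip
  have hEπ : Epi π := conf_epi hgp
  have hMg : Mono g := conf_mono hgp
  -- u is epi
  have hEu : Epi u := by
    apply Preadditive.epi_of_cancel_zero
    intro V z hz
    obtain ⟨y, hy⟩ := conf_desc hgp z (by rw [← hiu, Category.assoc, hz, comp_zero])
    have : p ≫ y = 0 := by rw [← hup, Category.assoc, hy, hz]
    have hy0 : y = 0 := by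
      rw [← cancel_epi p, this, comp_zero]
    rw [← hy, hy0, comp_zero]
  -- pull back π along p
  obtain ⟨P, p1, p2, hpb, hdp2⟩ := S.defl_pullback π p ⟨_, _, hgp⟩
  have hs0 : u ≫ π = 𝟙 W ≫ p := by rw [hup, Category.id_comp]
  set s : W ⟶ P := hpb.lift u (𝟙 W) hs0 with hsdef
  have hs1 : s ≫ p1 = u := hpb.lift_fst _ _ _
  have hs2 : s ≫ p2 = 𝟙 W := hpb.lift_snd _ _ _
  -- kernel of p2
  obtain ⟨g', hg'1, hg'2, hfac2, hMg'⟩ := pullback_kernel hpb hgp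
  -- splitting
  obtain ⟨r, hr1, hr2, hr3⟩ := splitting_of_section hg'2 hMg' (fun z hz => hfac2 z hz) hs2
  -- p1 is a deflation
  obtain ⟨P₂, q1, q2, hpb₂, hdq2⟩ := S.defl_pullback p π ⟨_, _, hip⟩
  have hDp1 : S.Deflation p1 := by
    set θ : P ⟶ P₂ := hpb₂.flip.lift p1 p2 hpb.w with hθdef
    have hθ1 : θ ≫ q2 = p1 := hpb₂.flip.lift_fst _ _ _
    have hθ2 : θ ≫ q1 = p2 := hpb₂.flip.lift_snd _ _ _
    set θ' : P₂ ⟶ P := hpb.lift q2 q1 hpb₂.flip.w with hθ'def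
    have hθ'1 : θ' ≫ p1 = q2 := hpb.lift_fst _ _ _
    have hθ'2 : θ' ≫ p2 = q1 := hpb.lift_snd _ _ _
    haveI : IsIso θ := by
      refine ⟨θ', ?_, ?_⟩
      · apply hpb.hom_ext <;> simp [Category.assoc, hθ1, hθ2, hθ'1, hθ'2]
      · apply hpb₂.hom_ext <;> simp [Category.assoc, hθ1, hθ2, hθ'1, hθ'2]
    rw [← hθ1]
    exact isIso_comp_deflation θ hdq2
  obtain ⟨N', n', hn'⟩ := hDp1
  -- kernel of p1
  obtain ⟨i', hi'1, hi'2, hfac1, hMi'⟩ := pullback_kernel hpb.flip hip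
  -- here  i' ≫ p2 = i  and  i' ≫ p1 = 0
  -- compute i' ≫ r = -𝟙
  have hexp : i' = (i' ≫ r) ≫ g' + i ≫ s := by
    conv_lhs => rw [← Category.comp_id i', ← hr3]
    rw [Preadditive.comp_add, ← Category.assoc, ← Category.assoc, hi'1]
  have key : (i' ≫ r) ≫ g + g = 0 := by
    calc (i' ≫ r) ≫ g + g
        = ((i' ≫ r) ≫ g' + i ≫ s) ≫ p1 := by
          simp only [Preadditive.add_comp, Category.assoc, hg'1, hs1, hiu]
      _ = i' ≫ p1 := by rw [← hexp]
      _ = 0 := hi'2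
  have hir : i' ≫ r = -𝟙 A := by
    have h1 : i' ≫ r + 𝟙 A = 0 := by
      have h0 : (i' ≫ r + 𝟙 A) ≫ g = 0 ≫ g := by
        rw [Preadditive.add_comp, Category.id_comp, key, zero_comp]
      exact (cancel_mono g).1 h0
    exact eq_neg_of_add_eq_zero_left h1
  -- construct the inverse
  set c : P ⟶ W := p2 + r ≫ i with hcdef
  have hic : i' ≫ c = 0 := by
    rw [hcdef, Preadditive.comp_add, hi'1, ← Category.assoc, hir]
    simp
  -- factor c through p1
  obtain ⟨ν, hν⟩ := hfac1 n' (S.conf_comp hn')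
  have hnc : n' ≫ c = 0 := by rw [← hν, Category.assoc, hic, comp_zero]
  obtain ⟨v, hv⟩ := conf_desc hn' c hnc
  have huv : u ≫ v = 𝟙 W := by
    have : s ≫ p1 ≫ v = s ≫ c := by rw [hv]
    rw [← Category.assoc, hs1] at this
    rw [this, hcdef, Preadditive.comp_add, hs2, ← Category.assoc, hr2, zero_comp, add_zero]
  have hvu : v ≫ u = 𝟙 Y := by
    rw [← cancel_epi u, ← Category.assoc, huv, Category.id_comp, Category.comp_id]
  exact ⟨v, huv, hvu⟩

end SchurHelpers
namespace SchurHelpers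

open ExactStruct

variable {E : Type u} [Category.{v} E] [pe : Preadditive E] {S : ExactStruct E}
variable [HasZeroObject E] [HasBinaryBiproducts E]

set_option linter.unusedSectionVars false

/-- If `(α, β, 𝟙)` is a morphism of conflations with `α` an inflation,
then `β` is an inflation. -/
lemma inflation_of_conflation_map {A B C' A' B' : E}
    {i₁ : A ⟶ B} {p₁ : B ⟶ C'} (h₁ : S.conf i₁ p₁)
    {i₂ : A' ⟶ B'} {p₂ : B' ⟶ C'} (h₂ : S.conf i₂ p₂)
    {α : A ⟶ A'} (hα : S.Inflation α) {β : B ⟶ B'}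
    (hsq : i₁ ≫ β = α ≫ i₂) (hπ : β ≫ p₂ = p₁) : S.Inflation β := by
  obtain ⟨W, inlα, inrα, hpo, hinrα⟩ := S.infl_pushout α i₁ hα
  obtain ⟨W₂, inl₂, inr₂, hpo₂, hinr₂⟩ := S.infl_pushout i₁ α ⟨_, _, h₁⟩
  -- inlα is also an inflation, by comparing the two pushouts
  have hinlα : S.Inflation inlα := by
    set θ : W ⟶ W₂ := hpo.desc inr₂ inl₂ hpo₂.flip.w with hθdef
    have hθ1 : inlα ≫ θ = inr₂ := hpo.inl_desc _ _ _
    have hθ2 : inrα ≫ θ = inl₂ := hpo.inr_desc _ _ _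
    set θ' : W₂ ⟶ W := hpo₂.flip.desc inlα inrα hpo.w with hθ'def
    have hθ'1 : inr₂ ≫ θ' = inlα := hpo₂.flip.inl_desc _ _ _
    have hθ'2 : inl₂ ≫ θ' = inrα := hpo₂.flip.inr_desc _ _ _
    haveI : IsIso θ' := by
      refine ⟨θ, ?_, ?_⟩
      · apply hpo₂.hom_ext
        · rw [← Category.assoc, hθ'2, hθ2, Category.comp_id]
        · rw [← Category.assoc, hθ'1, hθ1, Category.comp_id]
      · apply hpo.hom_ext
        · rw [← Category.assoc, hθ1, hθ'1, Category.comp_id]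
        · rw [← Category.assoc, hθ2, hθ'2, Category.comp_id]
    rw [← hθ'1]
    exact inflation_comp_isIso θ' hinr₂
  -- cokernel of inlα
  obtain ⟨πW, hπW1, hπW2, hfacW, hEπW⟩ := pushout_cokernel hpo.flip h₁
  -- hπW1 : inrα ≫ πW = p₁,  hπW2 : inlα ≫ πW = 0
  obtain ⟨Z, z, hz⟩ := hinlα
  have hconfW : S.conf inlα πW := conf_of_cokernel hz πW hπW2 (fun t ht => hfacW t ht) hEπW
  -- the comparison map
  set v : W ⟶ B' := hpo.desc i₂ β hsq.symm with hvdef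
  have hv1 : inlα ≫ v = i₂ := hpo.inl_desc _ _ _
  have hv2 : inrα ≫ v = β := hpo.inr_desc _ _ _
  have hvπ : v ≫ p₂ = πW := by
    apply hpo.hom_ext
    · rw [← Category.assoc, hv1, S.conf_comp h₂, hπW2]
    · rw [← Category.assoc, hv2, hπ, hπW1]
  haveI : IsIso v := shortFive hconfW h₂ hv1 hvπ
  rw [← hv2]
  exact inflation_comp_isIso v hinrα

/-- Every nonzero map from an object of finite length to a simple object is a
deflation, assuming Schur's property. -/
lemma deflation_to_simple
    (hschur : ∀ M N : E, S.Simple M → S.Simple N → ∀ f : M ⟶ N, f = 0 ∨ IsIso f)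
    {n : ℕ} {X : E} (hX : FiltLenP S.conf {M | S.Simple M} n X)
    {M : E} (hM : S.Simple M) : ∀ {f : X ⟶ M}, f ≠ 0 → S.Deflation f := by
  induction hX with
  | zero X hX0 =>
    intro f hf
    exact absurd (hX0.eq_of_src f 0) hf
  | step n j π hfilt hc hconf IH =>
    rename_i X' X T
    intro f hf
    by_cases h0 : j ≫ f = 0
    · -- f factors through the simple quotient T
      obtain ⟨fb, hfb⟩ := conf_desc hconf f h0
      have hfb0 : fb ≠ 0 := by
        intro h; exact hf (by rw [← hfb, h, comp_zero])
      rcases hschur T M hc hM fb with h | h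
      · exact absurd h hfb0
      · haveI := h
        rw [← hfb]
        exact deflation_comp_isIso fb ⟨_, _, hconf⟩
    · -- j ≫ f is a deflation by induction
      obtain ⟨K, e, he⟩ := IH h0
      obtain ⟨Q, q, m, πQ, hq, hm, hmπQ, hqπQ, puniv⟩ := pushout_defl_infl hconf he
      obtain ⟨u, hu1, hu2⟩ := puniv f (𝟙 M) (by rw [Category.comp_id])
      -- split conflation (m, πQ) with retraction u, gives biproduct structure
      obtain ⟨s, hs1, hs2, hs3⟩ := cosplitting_of_retraction (S.conf_comp hmπQ)
        (conf_epi hmπQ) (fun w hw => conf_desc hmπQ w hw) hu2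
      set ρ : Q ⟶ M ⊞ T := biprod.lift u πQ with hρdef
      haveI : IsIso ρ := by
        refine ⟨biprod.desc m s, ?_, ?_⟩
        · rw [hρdef, biprod.lift_desc, hs3]
        · apply biprod.hom_ext' <;> apply biprod.hom_ext <;>
            simp [hρdef, hu2, hs1, hs2, S.conf_comp hmπQ]
      have huρ : u = ρ ≫ biprod.fst := by rw [hρdef, biprod.lift_fst]
      have hDu : S.Deflation u := by
        rw [huρ]; exact isIso_comp_deflation ρ (deflation_biprod_fst M T)
      rw [← hu1]
      exact Deflation.comp ⟨_, _, hq⟩ hDu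

end SchurHelpers
namespace SchurHelpers

open ExactStruct

variable {E : Type u} [Category.{v} E] [pe : Preadditive E] {S : ExactStruct E}
variable [HasZeroObject E] [HasBinaryBiproducts E]

set_option linter.unusedSectionVars false

/-- Every morphism into a finite-length object factors as a deflation followed
by an inflation. -/
lemma factorization
    (hschur : ∀ M N : E, S.Simple M → S.Simple N → ∀ f : M ⟶ N, f = 0 ∨ IsIso f)
    (hl : S.IsLength)
    {n : ℕ} {Y : E} (hY : FiltLenP S.conf {M | S.Simple M} n Y) :
    ∀ {X : E} (f : X ⟶ Y), ∃ (D : E) (d : X ⟶ D) (i : D ⟶ Y),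
      S.Deflation d ∧ S.Inflation i ∧ d ≫ i = f := by
  induction hY with
  | zero Y hY0 =>
    intro X f
    obtain ⟨O, hO⟩ := HasZeroObject.zero (C := E)
    refine ⟨O, 0, 0, ⟨X, 𝟙 X, S.conf_id_left X O hO⟩, ⟨Y, 𝟙 Y, S.conf_id_right O Y hO⟩, ?_⟩
    rw [comp_zero]
    exact (hY0.eq_of_tgt 0 f)
  | step n gY' π hfilt hc hconf IH =>
    rename_i Y' Y T
    intro X f
    by_cases hfπ : f ≫ π = 0
    · obtain ⟨f₁, hf₁⟩ := conf_lift hconf f hfπ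
      obtain ⟨D, d, i, hd, hi, hdi⟩ := IH f₁
      refine ⟨D, d, i ≫ gY', hd, Inflation.comp hi ⟨_, _, hconf⟩, ?_⟩
      rw [← Category.assoc, hdi, hf₁]
    · -- f ≫ π is a deflation onto the simple T
      obtain ⟨n₀, hX₀⟩ := hl X
      have hDfπ : S.Deflation (f ≫ π) := deflation_to_simple hschur hX₀ hc hfπ
      obtain ⟨X₁, j₁, hj₁⟩ := hDfπ
      -- restrict f to X₁, factor it through Y' by induction
      have hu'0 : (j₁ ≫ f) ≫ π = 0 := by
        rw [Category.assoc, S.conf_comp hj₁]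
      obtain ⟨u', hu'⟩ := conf_lift hconf (j₁ ≫ f) hu'0
      obtain ⟨I, d₀, i₀, hd₀, hi₀, hcomp⟩ := IH u'
      obtain ⟨K, e, he⟩ := hd₀
      -- push out
      obtain ⟨Q, q, m, πQ, hq, hm, hmπQ, hqπQ, puniv⟩ := pushout_defl_infl hj₁ he
      obtain ⟨h, hh1, hh2⟩ := puniv f (i₀ ≫ gY')
        (by rw [← hu', ← hcomp, Category.assoc])
      have hhπ : h ≫ π = πQ := by
        have hEq : Epi q := conf_epi hq
        rw [← cancel_epi q, ← Category.assoc, hh1, hqπQ]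
      exact ⟨Q, q, h, ⟨_, _, hq⟩,
        inflation_of_conflation_map hmπQ hconf hi₀ hh2 hhπ, hh1⟩

end SchurHelpers
namespace SchurHelpers

open ExactStruct

variable {E : Type u} [Category.{v} E] [pe : Preadditive E] {S : ExactStruct E}
variable [HasZeroObject E] [HasBinaryBiproducts E]

set_option linter.unusedSectionVars false

section Assembly

variable (hschur : ∀ M N : E, S.Simple M → S.Simple N → ∀ f : M ⟶ N, f = 0 ∨ IsIso f)
  (hl : S.IsLength)

include hschur hl

lemma factorAll {X Y : E} (f : X ⟶ Y) : ∃ (D : E) (d : X ⟶ D) (i : D ⟶ Y),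
    S.Deflation d ∧ S.Inflation i ∧ d ≫ i = f := by
  obtain ⟨n, hY⟩ := hl Y
  exact factorization hschur hl hY f

lemma inflation_of_mono {X Y : E} (f : X ⟶ Y) (hm : Mono f) :
    ∃ (Z : E) (c : Y ⟶ Z), S.conf f c := by
  obtain ⟨D, d, i, ⟨K, k, hk⟩, ⟨Z, c, hc⟩, hdi⟩ := factorAll hschur hl f
  have hMd : Mono d := by
    have : Mono (d ≫ i) := by rw [hdi]; exact hm
    exact mono_of_mono d i
  haveI hId : IsIso d := conf_isIso_of_mono hk hMd
  refine ⟨Z, c, S.conf_iso (asIso d).symm (Iso.refl Y) (Iso.refl Z) hc ?_ (by simp)⟩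
  simp only [Iso.refl_hom, Category.comp_id, Iso.symm_hom, asIso_inv]
  rw [← hdi]
  simp

lemma deflation_of_epi {X Y : E} (f : X ⟶ Y) (he : Epi f) :
    ∃ (K : E) (k : K ⟶ X), S.conf k f := by
  obtain ⟨D, d, i, ⟨K, k, hk⟩, ⟨Z, c, hc⟩, hdi⟩ := factorAll hschur hl f
  have hEi : Epi i := by
    have : Epi (d ≫ i) := by rw [hdi]; exact he
    exact epi_of_epi d i
  haveI hIi : IsIso i := conf_isIso_of_epi hc hEi
  refine ⟨K, k, S.conf_iso (Iso.refl K) (Iso.refl X) (asIso i) hk (by simp) ?_⟩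
  simp only [Iso.refl_hom, Category.id_comp, asIso_hom]
  exact hdi

lemma hasKernels : HasKernels E := by
  constructor
  intro X Y f
  obtain ⟨D, d, i, ⟨K, k, hk⟩, ⟨Z, c, hc⟩, hdi⟩ := factorAll hschur hl f
  haveI hMi : Mono i := conf_mono hc
  haveI hMk : Mono k := conf_mono hk
  have w : k ≫ f = 0 := by
    rw [← hdi, ← Category.assoc, S.conf_comp hk, zero_comp]
  refine HasLimit.mk ⟨KernelFork.ofι k w, KernelFork.IsLimit.ofι' k w ?_⟩
  intro A t ht
  have h0 : t ≫ d = 0 := by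
    rw [← cancel_mono i, Category.assoc, hdi, ht, zero_comp]
  exact ⟨(conf_lift hk t h0).choose, (conf_lift hk t h0).choose_spec⟩

lemma hasCokernels : HasCokernels E := by
  constructor
  intro X Y f
  obtain ⟨D, d, i, ⟨K, k, hk⟩, ⟨Z, c, hc⟩, hdi⟩ := factorAll hschur hl f
  haveI hEd : Epi d := conf_epi hk
  haveI hEc : Epi c := conf_epi hc
  have w : f ≫ c = 0 := by
    rw [← hdi, Category.assoc, S.conf_comp hc, comp_zero]
  refine HasColimit.mk ⟨CokernelCofork.ofπ c w, CokernelCofork.IsColimit.ofπ' c w ?_⟩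
  intro A t ht
  have h0 : i ≫ t = 0 := by
    rw [← cancel_epi d, ← Category.assoc, hdi, ht, comp_zero]
  exact ⟨(conf_desc hc t h0).choose, (conf_desc hc t h0).choose_spec⟩

end Assembly

end SchurHelpers

/-- A length exact category `E` is abelian (with the
standard exact structure) if and only if every morphism between simple objects
of `E` is zero or an isomorphism (i.e. `simp E` is a semibrick). -/
theorem length_abelian_iff_schur {E : Type u} [Category.{v} E] [pe : Preadditive E]
    [HasZeroObject E] [HasBinaryBiproducts E] (S : ExactStruct E)
    (hl : S.IsLength) :
    (∃ inst : Abelian E, inst.toPreadditive = pe ∧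
      ∀ ⦃X Y Z : E⦄ (f : X ⟶ Y) (g : Y ⟶ Z) (w : f ≫ g = 0),
        S.conf f g ↔ (ShortComplex.mk f g w).ShortExact) ↔
    (∀ M N : E, S.Simple M → S.Simple N → ∀ f : M ⟶ N, f = 0 ∨ IsIso f) := by
  constructor
  · rintro ⟨inst, rfl, hconf⟩
    letI := inst
    have hsimple : ∀ (P : E), S.Simple P → CategoryTheory.Simple P := by
      intro P hP
      constructor
      intro Y g hg
      constructor
      · intro hiso h0
        subst h0
        apply hP.1
        rw [IsZero.iff_id_eq_zero, ← IsIso.inv_hom_id (0 : Y ⟶ P), comp_zero]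
      · intro hne
        have wc : g ≫ cokernel.π g = 0 := cokernel.condition g
        have hse : (ShortComplex.mk g (cokernel.π g) wc).ShortExact :=
          ShortComplex.ShortExact.mk'
            ((ShortComplex.mk g (cokernel.π g) wc).exact_of_g_is_cokernel
              (cokernelIsCokernel g)) hg (coequalizer.π_epi)
        have hcg : S.conf g (cokernel.π g) := (hconf g (cokernel.π g) wc).mpr hse
        rcases hP.2 g (cokernel.π g) hcg with hz | hz
        · exact absurd (hz.eq_of_src g 0) hne
        · have hc0 : cokernel.π g = 0 := hz.eq_of_tgt _ _
          haveI : Epi g := CategoryTheory.Abelian.epi_of_cokernel_π_eq_zero (f := g) hc0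
          exact isIso_of_mono_of_epi g
    intro M N hM hN f
    by_cases hf : f = 0
    · exact Or.inl hf
    · refine Or.inr ?_
      haveI := hsimple M hM
      haveI := hsimple N hN
      haveI : Mono f := Preadditive.mono_of_kernel_zero
        (mono_to_simple_zero_of_not_iso (kernel_not_iso_of_nonzero hf))
      have hc0 : cokernel.π f = 0 := cokernel_zero_of_nonzero_to_simple hf
      haveI : Epi f := CategoryTheory.Abelian.epi_of_cokernel_π_eq_zero (f := f) hc0
      exact isIso_of_mono_of_epi f
  · intro hschur
    letI : HasFiniteProducts E := hasFiniteProducts_of_has_binary_and_terminal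
    haveI hker : HasKernels E := SchurHelpers.hasKernels hschur hl
    haveI hcoker : HasCokernels E := SchurHelpers.hasCokernels hschur hl
    letI inst : Abelian E :=
      { normalMonoOfMono := fun f hm => by
          have h := SchurHelpers.inflation_of_mono hschur hl f hm
          exact ⟨h.choose, h.choose_spec.choose, S.conf_comp h.choose_spec.choose_spec,
            (S.conf_isKernel h.choose_spec.choose_spec).some⟩
        normalEpiOfEpi := fun f he => by
          have h := SchurHelpers.deflation_of_epi hschur hl f he
          exact ⟨h.choose, h.choose_spec.choose, S.conf_comp h.choose_spec.choose_spec,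
            (S.conf_isCokernel h.choose_spec.choose_spec).some⟩ }
    refine ⟨inst, rfl, ?_⟩
    intro X Y Z f g w
    constructor
    · intro h
      haveI hm : Mono f := SchurHelpers.conf_mono h
      haveI he : Epi g := SchurHelpers.conf_epi h
      exact ShortComplex.ShortExact.mk'
        ((ShortComplex.mk f g w).exact_of_f_is_kernel (S.conf_isKernel h).some) hm he
    · intro hse
      haveI := hse.mono_f
      haveI := hse.epi_g
      obtain ⟨Z', c, hc⟩ := SchurHelpers.inflation_of_mono hschur hl f hse.mono_f
      have hg := hse.gIsCokernel
      refine SchurHelpers.conf_of_cokernel hc g w ?_ hse.epi_g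
      intro W t ht
      obtain ⟨v, hv⟩ := CokernelCofork.IsColimit.desc' hg t ht
      exact ⟨v, hv⟩
end

section
/- If E is a length exact category that is not abelian (with the standard exact structure), then there exist simple objects S, T in E and a morphism S → T that is neither zero nor an isomorphism. -/
open CategoryTheory CategoryTheory.Limits

universe v u

namespace ExactStruct

section Helpers

open ZeroObject

variable {E : Type u} [Category.{v} E] [Preadditive E]
variable (S : ExactStruct E)

theorem conf_mono' {X Y Z : E} {f : X ⟶ Y} {g : Y ⟶ Z} (h : S.conf f g) : Mono f := by
  obtain ⟨hk⟩ := S.conf_isKernel h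
  constructor
  intro A a b hab
  exact Fork.IsLimit.hom_ext hk (by simpa using hab)

theorem conf_epi' {X Y Z : E} {f : X ⟶ Y} {g : Y ⟶ Z} (h : S.conf f g) : Epi g := by
  obtain ⟨hc⟩ := S.conf_isCokernel h
  constructor
  intro A a b hab
  exact Cofork.IsColimit.hom_ext hc (by simpa using hab)

theorem conf_lift {X Y Z : E} {f : X ⟶ Y} {g : Y ⟶ Z} (h : S.conf f g) {A : E} (t : A ⟶ Y)
    (ht : t ≫ g = 0) : ∃ l : A ⟶ X, l ≫ f = t := by
  obtain ⟨hk⟩ := S.conf_isKernel h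
  obtain ⟨l, hl⟩ := KernelFork.IsLimit.lift' hk t ht
  exact ⟨l, by simpa using hl⟩

theorem conf_desc {X Y Z : E} {f : X ⟶ Y} {g : Y ⟶ Z} (h : S.conf f g) {A : E} (t : Y ⟶ A)
    (ht : f ≫ t = 0) : ∃ u : Z ⟶ A, g ≫ u = t := by
  obtain ⟨hc⟩ := S.conf_isCokernel h
  obtain ⟨u, hu⟩ := CokernelCofork.IsColimit.desc' hc t ht
  exact ⟨u, by simpa using hu⟩

theorem conf_swap_kernel {K K' Y Z : E} {k : K ⟶ Y} {g : Y ⟶ Z} (h : S.conf k g)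
    (k' : K' ⟶ Y) (hk0 : k' ≫ g = 0)
    (hmono : ∀ {A : E} (x : A ⟶ K'), x ≫ k' = 0 → x = 0)
    (hfact : ∀ {A : E} (t : A ⟶ Y), t ≫ g = 0 → ∃ u : A ⟶ K', u ≫ k' = t) :
    S.conf k' g := by
  haveI hkm : Mono k := S.conf_mono' h
  obtain ⟨u, hu⟩ := hfact k (S.conf_comp h)
  obtain ⟨e, he⟩ := S.conf_lift h k' hk0
  have h1 : u ≫ e = 𝟙 K := by
    rw [← cancel_mono k, Category.assoc, he, hu, Category.id_comp]
  have h2 : e ≫ u = 𝟙 K' := by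
    have h3 := hmono (e ≫ u - 𝟙 K')
      (by rw [Preadditive.sub_comp, Category.assoc, hu, he, Category.id_comp, sub_self])
    rwa [sub_eq_zero] at h3
  exact S.conf_iso (Iso.mk u e h1 h2) (Iso.refl Y) (Iso.refl Z) h (by simp [hu]) (by simp)

theorem conf_swap_cokernel {X Y Q Q' : E} {f : X ⟶ Y} {q : Y ⟶ Q} (h : S.conf f q)
    (q' : Y ⟶ Q') (hq0 : f ≫ q' = 0)
    (hepi : ∀ {A : E} (x : Q' ⟶ A), q' ≫ x = 0 → x = 0)
    (hfact : ∀ {A : E} (t : Y ⟶ A), f ≫ t = 0 → ∃ u : Q' ⟶ A, q' ≫ u = t) :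
    S.conf f q' := by
  haveI hqe : Epi q := S.conf_epi' h
  obtain ⟨u, hu⟩ := hfact q (S.conf_comp h)
  obtain ⟨e, he⟩ := S.conf_desc h q' hq0
  have h1 : e ≫ u = 𝟙 Q := by
    rw [← cancel_epi q, ← Category.assoc, he, hu, Category.comp_id]
  have h2 : u ≫ e = 𝟙 Q' := by
    have h3 := hepi (u ≫ e - 𝟙 Q')
      (by rw [Preadditive.comp_sub, ← Category.assoc, hu, he, Category.comp_id, sub_self])
    rwa [sub_eq_zero] at h3
  exact S.conf_iso (Iso.refl X) (Iso.refl Y) (Iso.mk e u h1 h2) h (by simp) (by simp [he])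

variable [HasZeroObject E] [HasBinaryBiproducts E]

theorem conf_inr_fst (X Y : E) :
    S.conf (biprod.inr : Y ⟶ X ⊞ Y) biprod.fst := by
  obtain ⟨P, inl, inr, hPO, Z, gP, hgP⟩ :=
    S.infl_pushout (0 : (0 : E) ⟶ X) (0 : (0 : E) ⟶ Y)
      ⟨X, 𝟙 X, S.conf_id_right _ _ (isZero_zero E)⟩
  have hcomm : (0 : (0 : E) ⟶ X) ≫ biprod.inl = (0 : (0 : E) ⟶ Y) ≫ biprod.inr := by simp
  have hinl : inl ≫ hPO.desc biprod.inl biprod.inr hcomm = biprod.inl := hPO.inl_desc _ _ _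
  have hinr : inr ≫ hPO.desc biprod.inl biprod.inr hcomm = biprod.inr := hPO.inr_desc _ _ _
  have h1 : hPO.desc biprod.inl biprod.inr hcomm ≫ biprod.desc inl inr = 𝟙 P := by
    apply hPO.hom_ext
    · rw [← Category.assoc, hinl, Category.comp_id, biprod.inl_desc]
    · rw [← Category.assoc, hinr, Category.comp_id, biprod.inr_desc]
  have h2 : biprod.desc inl inr ≫ hPO.desc biprod.inl biprod.inr hcomm = 𝟙 (X ⊞ Y) := by
    apply biprod.hom_ext' <;> rw [← Category.assoc, Category.comp_id]
    · rw [biprod.inl_desc, hinl]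
    · rw [biprod.inr_desc, hinr]
  have hc2 : S.conf (biprod.inr : Y ⟶ X ⊞ Y) (biprod.desc inl inr ≫ gP) := by
    refine S.conf_iso (Iso.refl Y)
      (Iso.mk (hPO.desc biprod.inl biprod.inr hcomm) (biprod.desc inl inr) h1 h2)
      (Iso.refl Z) hgP (by simpa using hinr) ?_
    show gP ≫ (Iso.refl Z).hom = hPO.desc biprod.inl biprod.inr hcomm ≫ biprod.desc inl inr ≫ gP
    rw [Iso.refl_hom, Category.comp_id, ← Category.assoc, h1, Category.id_comp]
  refine S.conf_swap_cokernel hc2 biprod.fst (by simp) ?_ ?_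
  · intro A x hx
    have h4 := congrArg (fun z => biprod.inl ≫ z) hx
    simpa using h4
  · intro A t ht
    refine ⟨biprod.inl ≫ t, ?_⟩
    apply biprod.hom_ext'
    · rw [← Category.assoc]; simp
    · rw [← Category.assoc]; simp [ht]

theorem split_section {A B C0 : E} {j : A ⟶ B} {r : B ⟶ C0} (h : S.conf j r)
    (w : C0 ⟶ B) (hw : w ≫ r = 𝟙 C0) :
    ∃ ρ : B ⟶ A, j ≫ ρ = 𝟙 A ∧ w ≫ ρ = 0 ∧ ρ ≫ j + r ≫ w = 𝟙 B ∧ S.conf w ρ := by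
  haveI hjm : Mono j := S.conf_mono' h
  obtain ⟨ρ, hρ⟩ := S.conf_lift h (𝟙 B - r ≫ w)
    (by rw [Preadditive.sub_comp, Category.id_comp, Category.assoc, hw, Category.comp_id,
      sub_self])
  have hρ1 : j ≫ ρ = 𝟙 A := by
    rw [← cancel_mono j, Category.assoc, hρ, Preadditive.comp_sub, Category.comp_id,
      ← Category.assoc, S.conf_comp h, zero_comp, sub_zero, Category.id_comp]
  have hρ2 : w ≫ ρ = 0 := by
    rw [← cancel_mono j, Category.assoc, hρ, Preadditive.comp_sub, Category.comp_id,
      ← Category.assoc, hw, Category.id_comp, sub_self, zero_comp]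
  have hid : ρ ≫ j + r ≫ w = 𝟙 B := by rw [hρ]; abel
  have hφψ : biprod.lift ρ r ≫ biprod.desc j w = 𝟙 B := by rw [biprod.lift_desc, hid]
  have hψφ : biprod.desc j w ≫ biprod.lift ρ r = 𝟙 (A ⊞ C0) := by
    apply biprod.hom_ext' <;> apply biprod.hom_ext <;>
      simp [hρ1, hρ2, S.conf_comp h, hw]
  have hψρ : biprod.desc j w ≫ ρ = biprod.fst := by
    apply biprod.hom_ext' <;> rw [← Category.assoc] <;> simp [hρ1, hρ2]
  have hc : S.conf w ρ :=
    S.conf_iso (Iso.refl C0) (Iso.mk (biprod.desc j w) (biprod.lift ρ r) hψφ hφψ)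
      (Iso.refl A) (S.conf_inr_fst A C0) (by simp) (by simp [hψρ])
  exact ⟨ρ, hρ1, hρ2, hid, hc⟩

theorem split_retraction {A B C0 : E} {j : A ⟶ B} {r : B ⟶ C0} (h : S.conf j r)
    (u : B ⟶ A) (hu : j ≫ u = 𝟙 A) : S.Deflation u := by
  haveI hre : Epi r := S.conf_epi' h
  obtain ⟨σ, hσ⟩ := S.conf_desc h (𝟙 B - u ≫ j)
    (by rw [Preadditive.comp_sub, Category.comp_id, ← Category.assoc, hu, Category.id_comp,
      sub_self])
  have key : (u ≫ j) ≫ u ≫ j = u ≫ j := by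
    rw [Category.assoc, ← Category.assoc j u j, hu, Category.id_comp]
  have hidem : (𝟙 B - u ≫ j) ≫ (𝟙 B - u ≫ j) = 𝟙 B - u ≫ j := by
    rw [Preadditive.sub_comp, Category.id_comp, Preadditive.comp_sub, Category.comp_id, key,
      sub_self, sub_zero]
  have hzero : (𝟙 B - u ≫ j) ≫ u = 0 := by
    rw [Preadditive.sub_comp, Category.id_comp, Category.assoc, hu, Category.comp_id, sub_self]
  have h1 : (𝟙 B - u ≫ j) ≫ r = r := by
    rw [Preadditive.sub_comp, Category.id_comp, Category.assoc, S.conf_comp h, comp_zero,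
      sub_zero]
  have h2 : σ ≫ r = 𝟙 C0 := by
    rw [← cancel_epi r, ← Category.assoc, hσ, h1, Category.comp_id]
  have hidB : u ≫ j + r ≫ σ ≫ (𝟙 B - u ≫ j) = 𝟙 B := by
    rw [← Category.assoc, hσ, hidem]; abel
  have hφψ : biprod.lift u r ≫ biprod.desc j (σ ≫ (𝟙 B - u ≫ j)) = 𝟙 B := by
    rw [biprod.lift_desc, hidB]
  have hψφ : biprod.desc j (σ ≫ (𝟙 B - u ≫ j)) ≫ biprod.lift u r = 𝟙 (A ⊞ C0) := by
    apply biprod.hom_ext' <;> apply biprod.hom_ext <;>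
      simp [hu, h2, S.conf_comp h]
  have hψu : biprod.desc j (σ ≫ (𝟙 B - u ≫ j)) ≫ u = biprod.fst := by
    apply biprod.hom_ext' <;> simp [hu]
  have hc : S.conf (σ ≫ (𝟙 B - u ≫ j)) u :=
    S.conf_iso (Iso.refl C0)
      (Iso.mk (biprod.desc j (σ ≫ (𝟙 B - u ≫ j))) (biprod.lift u r) hψφ hφψ)
      (Iso.refl A) (S.conf_inr_fst A C0) (by simp)
      (by show biprod.fst ≫ (Iso.refl A).hom = biprod.desc j (σ ≫ (𝟙 B - u ≫ j)) ≫ u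
          rw [Iso.refl_hom, Category.comp_id, hψu])
  exact ⟨C0, _, hc⟩

theorem pullback_kernel {P Y Z T KD : E} {p1 : P ⟶ Y} {p2 : P ⟶ T} {d : Y ⟶ Z} {t : T ⟶ Z}
    (hpb : IsPullback p1 p2 d t) {kd : KD ⟶ Y} (hd : S.conf kd d) (hp2 : S.Deflation p2) :
    ∃ ι : KD ⟶ P, ι ≫ p1 = kd ∧ ι ≫ p2 = 0 ∧ S.conf ι p2 := by
  have hw : kd ≫ d = (0 : KD ⟶ T) ≫ t := by rw [S.conf_comp hd, zero_comp]
  refine ⟨hpb.lift kd 0 hw, hpb.lift_fst _ _ _, hpb.lift_snd _ _ _, ?_⟩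
  obtain ⟨K0, κ, hκ⟩ := hp2
  haveI := S.conf_mono' hd
  refine S.conf_swap_kernel hκ _ (hpb.lift_snd _ _ _) ?_ ?_
  · intro A x hx
    have h1 : x ≫ kd = 0 := by
      rw [← hpb.lift_fst kd 0 hw, ← Category.assoc, hx, zero_comp]
    exact (cancel_mono kd).1 (by rw [h1, zero_comp])
  · intro A x hx
    have h1 : (x ≫ p1) ≫ d = 0 := by
      rw [Category.assoc, hpb.w, ← Category.assoc, hx, zero_comp]
    obtain ⟨u, hu⟩ := S.conf_lift hd (x ≫ p1) h1
    refine ⟨u, hpb.hom_ext ?_ ?_⟩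
    · rw [Category.assoc, hpb.lift_fst, hu]
    · rw [Category.assoc, hpb.lift_snd, comp_zero, hx]

theorem pullback_symm_deflation {P Y Z T : E} {p1 : P ⟶ Y} {p2 : P ⟶ T} {d : Y ⟶ Z} {t : T ⟶ Z}
    (hpb : IsPullback p1 p2 d t) (ht : S.Deflation t) : S.Deflation p1 := by
  obtain ⟨P', q1, q2, hpb', hq2⟩ := S.defl_pullback t d ht
  obtain ⟨K', κ', hκ'⟩ := hq2
  refine ⟨K', κ' ≫ (hpb.flip.isoIsPullback _ _ hpb').inv, ?_⟩
  refine S.conf_iso (Iso.refl K') (hpb.flip.isoIsPullback _ _ hpb').symm (Iso.refl Y) hκ'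
    (by simp) ?_
  have h1 : (hpb.flip.isoIsPullback _ _ hpb').hom ≫ q2 = p1 :=
    hpb.flip.isoIsPullback_hom_snd _ _ hpb'
  rw [Iso.refl_hom, Category.comp_id, Iso.symm_hom, hpb.flip.isoIsPullback_inv_snd _ _ hpb']

theorem noether {K A B SS TT Q : E} {k : K ⟶ A} {d : A ⟶ SS} {i : A ⟶ B} {p : B ⟶ TT}
    {q : B ⟶ Q} (hkd : S.conf k d) (hip : S.conf i p) (hq : S.conf (k ≫ i) q) :
    ∃ (j : SS ⟶ Q) (r : Q ⟶ TT), S.conf j r ∧ d ≫ j = i ≫ q ∧ q ≫ r = p := by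
  haveI hde : Epi d := S.conf_epi' hkd
  haveI hqe : Epi q := S.conf_epi' hq
  obtain ⟨j, hj⟩ := S.conf_desc hkd (i ≫ q) (by rw [← Category.assoc, S.conf_comp hq])
  obtain ⟨r, hr⟩ := S.conf_desc hq p (by rw [Category.assoc, S.conf_comp hip, comp_zero])
  obtain ⟨P, inl, inr, hPO, Z, gz, hgz⟩ := S.infl_pushout i d ⟨TT, p, hip⟩
  obtain ⟨einv, heinv⟩ := S.conf_desc hq inl
    (by rw [Category.assoc, hPO.w, ← Category.assoc, S.conf_comp hkd, zero_comp])
  have hinl : inl ≫ hPO.desc q j hj.symm = q := hPO.inl_desc _ _ _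
  have hinr : inr ≫ hPO.desc q j hj.symm = j := hPO.inr_desc _ _ _
  have h1 : hPO.desc q j hj.symm ≫ einv = 𝟙 P := by
    apply hPO.hom_ext
    · rw [← Category.assoc, hinl, Category.comp_id, heinv]
    · rw [← Category.assoc, hinr, Category.comp_id, ← cancel_epi d, ← Category.assoc, hj,
        Category.assoc, heinv, hPO.w]
  have h2 : einv ≫ hPO.desc q j hj.symm = 𝟙 Q := by
    rw [← cancel_epi q, ← Category.assoc, heinv, hinl, Category.comp_id]
  have hjz : S.conf j (einv ≫ gz) :=
    S.conf_iso (Iso.refl SS) (Iso.mk (hPO.desc q j hj.symm) einv h1 h2) (Iso.refl Z) hgz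
      (by simpa using hinr)
      (by show gz ≫ (Iso.refl Z).hom = hPO.desc q j hj.symm ≫ einv ≫ gz
          rw [Iso.refl_hom, Category.comp_id, ← Category.assoc, h1, Category.id_comp])
  have hjr : S.conf j r := by
    refine S.conf_swap_cokernel hjz r ?_ ?_ ?_
    · rw [← cancel_epi d, comp_zero, ← Category.assoc, hj, Category.assoc, hr,
        S.conf_comp hip]
    · intro A' x hx
      have h3 : p ≫ x = 0 := by rw [← hr, Category.assoc, hx, comp_zero]
      haveI := S.conf_epi' hip
      exact (cancel_epi p).1 (by rw [h3, comp_zero])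
    · intro A' x hx
      obtain ⟨s, hs⟩ := S.conf_desc hip (q ≫ x)
        (by rw [← Category.assoc, ← hj, Category.assoc, hx, comp_zero])
      refine ⟨s, (cancel_epi q).1 ?_⟩
      rw [← Category.assoc, hr, hs]
  exact ⟨j, r, hjr, hj, hr⟩

end Helpers

end ExactStruct
namespace ExactStruct

section Helpers2

open ZeroObject

variable {E : Type u} [Category.{v} E] [Preadditive E]
variable (S : ExactStruct E)
variable [HasZeroObject E] [HasBinaryBiproducts E]

theorem shortFive {C0 M1 M2 T0 : E} {u1 : C0 ⟶ M1} {v1 : M1 ⟶ T0} {u2 : C0 ⟶ M2} {v2 : M2 ⟶ T0}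
    (hc1 : S.conf u1 v1) (hc2 : S.conf u2 v2) (θ : M1 ⟶ M2)
    (hθ1 : u1 ≫ θ = u2) (hθ2 : θ ≫ v2 = v1) : IsIso θ := by
  haveI hu2m : Mono u2 := S.conf_mono' hc2
  haveI hmono : Mono θ := by
    constructor
    intro A a b hab
    have h0 : (a - b) ≫ θ = 0 := by rw [Preadditive.sub_comp, hab, sub_self]
    have h1 : (a - b) ≫ v1 = 0 := by rw [← hθ2, ← Category.assoc, h0, zero_comp]
    obtain ⟨x, hx⟩ := S.conf_lift hc1 (a - b) h1
    have h2 : x ≫ u2 = 0 := by rw [← hθ1, ← Category.assoc, hx, h0]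
    have h3 : x = 0 := (cancel_mono u2).1 (by rw [h2, zero_comp])
    have h4 : a - b = 0 := by rw [← hx, h3, zero_comp]
    rwa [sub_eq_zero] at h4
  obtain ⟨PB, π1, π2, hpb, hπ2⟩ := S.defl_pullback v2 v1 ⟨_, _, hc2⟩
  have hσw : θ ≫ v2 = 𝟙 M1 ≫ v1 := by rw [hθ2, Category.id_comp]
  have hσ1 : hpb.lift θ (𝟙 M1) hσw ≫ π1 = θ := hpb.lift_fst _ _ _
  have hσ2 : hpb.lift θ (𝟙 M1) hσw ≫ π2 = 𝟙 M1 := hpb.lift_snd _ _ _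
  obtain ⟨ι, hι1, hι2, hιc⟩ := S.pullback_kernel hpb hc2 hπ2
  have hπ1d : S.Deflation π1 := S.pullback_symm_deflation hpb ⟨_, _, hc1⟩
  obtain ⟨ι', hι'2, hι'1, hι'c⟩ := S.pullback_kernel hpb.flip hc1 hπ1d
  obtain ⟨ρ, hρι, hρσ, hρid, -⟩ := S.split_section hιc (hpb.lift θ (𝟙 M1) hσw) hσ2
  have hexp : π1 = ρ ≫ u2 + π2 ≫ θ := by
    conv_lhs => rw [← Category.id_comp π1, ← hρid]
    rw [Preadditive.add_comp, Category.assoc, Category.assoc, hι1, hσ1]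
  have hneg : ι' ≫ ρ = -𝟙 C0 := by
    have h5 : ι' ≫ π1 = ι' ≫ ρ ≫ u2 + ι' ≫ π2 ≫ θ := by
      rw [hexp, Preadditive.comp_add]
    rw [hι'1, ← Category.assoc, ← Category.assoc, hι'2, hθ1] at h5
    have h6 : (ι' ≫ ρ + 𝟙 C0) ≫ u2 = 0 := by
      rw [Preadditive.add_comp, Category.id_comp, ← h5]
    have h7 : ι' ≫ ρ + 𝟙 C0 = 0 := (cancel_mono u2).1 (by rw [h6, zero_comp])
    exact eq_neg_of_add_eq_zero_left h7
  have hφ0 : ι' ≫ (𝟙 PB + ρ ≫ ι') = 0 := by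
    rw [Preadditive.comp_add, Category.comp_id, ← Category.assoc, hneg, Preadditive.neg_comp,
      Category.id_comp, add_neg_cancel]
  obtain ⟨σ', hσ'⟩ := S.conf_desc hι'c (𝟙 PB + ρ ≫ ι') hφ0
  haveI hπ1e : Epi π1 := S.conf_epi' hι'c
  have hσ'π1 : σ' ≫ π1 = 𝟙 M2 := by
    rw [← cancel_epi π1, ← Category.assoc, hσ', Category.comp_id, Preadditive.add_comp,
      Category.id_comp, Category.assoc, hι'1, comp_zero, add_zero]
  have hσ'ρ : σ' ≫ ρ = 0 := by
    rw [← cancel_epi π1, ← Category.assoc, hσ', comp_zero, Preadditive.add_comp,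
      Category.id_comp, Category.assoc, hneg, Preadditive.comp_neg, Category.comp_id,
      add_neg_cancel]
  have hstar : π2 ≫ θ = π1 - ρ ≫ u2 := by rw [hexp]; abel
  have hτθ : (σ' ≫ π2) ≫ θ = 𝟙 M2 := by
    rw [Category.assoc, hstar, Preadditive.comp_sub, hσ'π1, ← Category.assoc, hσ'ρ,
      zero_comp, sub_zero]
  have hθτ : θ ≫ σ' ≫ π2 = 𝟙 M1 := by
    rw [← cancel_mono θ, Category.assoc, hτθ, Category.comp_id, Category.id_comp]
  exact ⟨σ' ≫ π2, hθτ, hτθ⟩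

end Helpers2

end ExactStruct
namespace ExactStruct

section Helpers3

open ZeroObject

variable {E : Type u} [Category.{v} E] [Preadditive E]
variable (S : ExactStruct E)
variable [HasZeroObject E] [HasBinaryBiproducts E]

theorem deflation_to_simple
    (H : ∀ ⦃M N : E⦄ (f : M ⟶ N), S.Simple M → S.Simple N → f ≠ 0 → IsIso f) :
    ∀ {n : ℕ} {X : E}, FiltLenP S.conf {M | S.Simple M} n X →
      ∀ {T : E} (f : X ⟶ T), S.Simple T → f ≠ 0 → S.Deflation f := by
  intro n X hX
  induction hX with
  | zero X hX =>
    intro T f _ hf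
    exact absurd (hX.eq_of_src f 0) hf
  | @step X' Xtop S0 n a b hX' hS0 hco ih =>
    intro T f hT hf
    by_cases hcase : a ≫ f = 0
    · obtain ⟨v, hv⟩ := S.conf_desc hco f hcase
      have hv0 : v ≠ 0 := by
        rintro rfl
        rw [comp_zero] at hv
        exact hf hv.symm
      have hvi : IsIso v := H v hS0 hT hv0
      exact ⟨_, a, S.conf_iso (Iso.refl _) (Iso.refl _) (asIso v) hco (by simp)
        (by simpa using hv)⟩
    · obtain ⟨KX, kx, hkx⟩ := ih (a ≫ f) hT hcase
      obtain ⟨Q, q, hq⟩ := S.infl_comp ⟨_, _, hkx⟩ ⟨_, _, hco⟩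
      obtain ⟨j, r, hjr, hj, hr⟩ := S.noether hkx hco hq
      obtain ⟨u, hu⟩ := S.conf_desc hq f (by rw [Category.assoc, S.conf_comp hkx])
      haveI hepi : Epi (a ≫ f) := S.conf_epi' hkx
      have hju : j ≫ u = 𝟙 T := by
        apply (cancel_epi (a ≫ f)).1
        calc (a ≫ f) ≫ j ≫ u = ((a ≫ f) ≫ j) ≫ u := by rw [← Category.assoc]
          _ = (a ≫ q) ≫ u := by rw [hj]
          _ = a ≫ q ≫ u := by rw [Category.assoc]
          _ = a ≫ f := by rw [hu]
          _ = (a ≫ f) ≫ 𝟙 T := by rw [Category.comp_id]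
      have hud : S.Deflation u := S.split_retraction hjr u hju
      obtain ⟨K2, k2, hk2⟩ := S.defl_comp ⟨_, _, hq⟩ hud
      exact ⟨K2, k2, hu ▸ hk2⟩

theorem admissible
    (H : ∀ ⦃M N : E⦄ (f : M ⟶ N), S.Simple M → S.Simple N → f ≠ 0 → IsIso f)
    (hl : S.IsLength) :
    ∀ {n : ℕ} {Y : E}, FiltLenP S.conf {M | S.Simple M} n Y →
      ∀ {X : E} (f : X ⟶ Y), ∃ (I : E) (dd : X ⟶ I) (m : I ⟶ Y),
        S.Deflation dd ∧ S.Inflation m ∧ dd ≫ m = f := by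
  intro n Y hY
  induction hY with
  | zero Y hY =>
    intro X f
    refine ⟨Y, f, 𝟙 Y, ⟨X, 𝟙 X, ?_⟩, ⟨Y, 0, S.conf_id_left Y Y hY⟩, Category.comp_id f⟩
    have h0 : f = 0 := hY.eq_of_tgt f 0
    rw [h0]
    exact S.conf_id_left X Y hY
  | @step Y' Ytop T n i p hY' hT hco ih =>
    intro X f
    by_cases hg : f ≫ p = 0
    · obtain ⟨f', hf'⟩ := S.conf_lift hco f hg
      obtain ⟨I, dd, m, hdd, hm, hdm⟩ := ih f'
      obtain ⟨Z2, g2, hg2⟩ := S.infl_comp hm ⟨_, _, hco⟩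
      exact ⟨I, dd, m ≫ i, hdd, ⟨Z2, g2, hg2⟩, by rw [← Category.assoc, hdm, hf']⟩
    · obtain ⟨nX, hXf⟩ := hl X
      obtain ⟨K, k, hk⟩ := S.deflation_to_simple H hXf (f ≫ p) hT hg
      obtain ⟨h, hh⟩ := S.conf_lift hco (k ≫ f)
        (by rw [Category.assoc]; exact S.conf_comp hk)
      obtain ⟨C, eh, m, hehD, hmI, hehm⟩ := ih h
      obtain ⟨K', k', hk'⟩ := hehD
      obtain ⟨D, c', hc'⟩ := hmI
      obtain ⟨Q3, q3, hq3⟩ := S.infl_comp ⟨_, _, hc'⟩ ⟨_, _, hco⟩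
      obtain ⟨j3, r3, hjr3, hcj, hqr3⟩ := S.noether hc' hco hq3
      -- hcj : c' ≫ j3 = i ≫ q3 ; hqr3 : q3 ≫ r3 = p
      have hkfq : k ≫ f ≫ q3 = 0 := by
        have h1 := reassoc_of% (S.conf_comp hc')
        rw [← Category.assoc, ← hh, Category.assoc, ← hcj, ← hehm, Category.assoc, h1,
          zero_comp, comp_zero]
      obtain ⟨w, hw⟩ := S.conf_desc hk (f ≫ q3) hkfq
      -- hw : (f ≫ p) ≫ w = f ≫ q3
      haveI hepi_fp : Epi (f ≫ p) := S.conf_epi' hk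
      have hwr : w ≫ r3 = 𝟙 T := by
        apply (cancel_epi (f ≫ p)).1
        calc (f ≫ p) ≫ w ≫ r3 = ((f ≫ p) ≫ w) ≫ r3 := by rw [← Category.assoc]
          _ = (f ≫ q3) ≫ r3 := by rw [hw]
          _ = f ≫ q3 ≫ r3 := by rw [Category.assoc]
          _ = f ≫ p := by rw [hqr3]
          _ = (f ≫ p) ≫ 𝟙 T := by rw [Category.comp_id]
      obtain ⟨ρ3, hρj, hwρ, hρid, hconfwρ⟩ := S.split_section hjr3 w hwr
      obtain ⟨K4, k4, hk4⟩ := S.defl_comp ⟨_, _, hq3⟩ ⟨_, _, hconfwρ⟩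
      -- hk4 : conf k4 (q3 ≫ ρ3)
      obtain ⟨PB2, ψ1, ψ2, hpb2, hψ2⟩ := S.defl_pullback q3 w ⟨_, _, hq3⟩
      have hψ1pD : S.conf ψ1 (q3 ≫ ρ3) := by
        refine S.conf_swap_kernel hk4 ψ1 ?_ ?_ ?_
        · calc ψ1 ≫ q3 ≫ ρ3 = (ψ1 ≫ q3) ≫ ρ3 := by rw [Category.assoc]
            _ = (ψ2 ≫ w) ≫ ρ3 := by rw [hpb2.w]
            _ = ψ2 ≫ w ≫ ρ3 := by rw [Category.assoc]
            _ = 0 := by rw [hwρ, comp_zero]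
        · intro A x hx
          have h1 : (x ≫ ψ2) ≫ w = 0 := by
            rw [Category.assoc, ← hpb2.w, ← Category.assoc, hx, zero_comp]
          have hxψ2 : x ≫ ψ2 = 0 := by
            have h2 : x ≫ ψ2 = ((x ≫ ψ2) ≫ w) ≫ r3 := by
              rw [Category.assoc, hwr, Category.comp_id]
            rw [h2, h1, zero_comp]
          exact hpb2.hom_ext (by rw [hx, zero_comp]) (by rw [hxψ2, zero_comp])
        · intro A x hx
          have hx' := reassoc_of% hx
          have hqr3' := reassoc_of% hqr3
          have hxq3 : x ≫ q3 = (x ≫ p) ≫ w := by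
            calc x ≫ q3 = x ≫ q3 ≫ (ρ3 ≫ j3 + r3 ≫ w) := by rw [hρid, Category.comp_id]
              _ = x ≫ q3 ≫ ρ3 ≫ j3 + x ≫ q3 ≫ r3 ≫ w := by
                  simp only [Preadditive.comp_add, Category.assoc]
              _ = (x ≫ p) ≫ w := by rw [hx', hqr3', zero_comp, zero_add, Category.assoc]
          exact ⟨hpb2.lift x (x ≫ p) hxq3, hpb2.lift_fst _ _ _⟩
      have hw' := reassoc_of% hw
      have hfpD : f ≫ q3 ≫ ρ3 = 0 := by
        rw [← hw', hwρ]
        simp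
      obtain ⟨dt, hdt⟩ := S.conf_lift hψ1pD f hfpD
      obtain ⟨Q5, q5, hq5⟩ := S.infl_comp ⟨_, _, hk'⟩ ⟨_, _, hk⟩
      obtain ⟨c5, r5, hc5r5, hec5, hq5r5⟩ := S.noether hk' hk hq5
      have hkkf : k' ≫ k ≫ f = 0 := by
        have h1 := reassoc_of% (S.conf_comp hk')
        rw [← hh, ← hehm, Category.assoc, h1, zero_comp]
      have hjdt : (k' ≫ k) ≫ dt = 0 := by
        haveI := S.conf_mono' hψ1pD
        apply (cancel_mono ψ1).1
        rw [zero_comp, Category.assoc, Category.assoc, hdt, hkkf]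
      obtain ⟨θ, hθ⟩ := S.conf_desc hq5 dt hjdt
      obtain ⟨ι2, hι2ψ1, hι2ψ2, hι2c⟩ := S.pullback_kernel hpb2 hq3 hψ2
      haveI hepi_eh : Epi eh := S.conf_epi' hk'
      haveI hepi_q5 : Epi q5 := S.conf_epi' hq5
      have hθ' := reassoc_of% hθ
      have hc5mI : c5 ≫ θ ≫ ψ1 = m ≫ i := by
        apply (cancel_epi eh).1
        have hec5' := reassoc_of% hec5
        calc eh ≫ c5 ≫ θ ≫ ψ1 = k ≫ q5 ≫ θ ≫ ψ1 := by rw [hec5']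
          _ = k ≫ dt ≫ ψ1 := by rw [hθ']
          _ = k ≫ f := by rw [hdt]
          _ = h ≫ i := hh.symm
          _ = eh ≫ m ≫ i := by rw [← hehm, Category.assoc]
      have hdtψ2 : dt ≫ ψ2 = f ≫ p := by
        have hpw := reassoc_of% hpb2.w
        calc dt ≫ ψ2 = dt ≫ ψ2 ≫ 𝟙 T := by rw [Category.comp_id]
          _ = dt ≫ ψ2 ≫ w ≫ r3 := by rw [← hwr]
          _ = dt ≫ ψ1 ≫ q3 ≫ r3 := by rw [← hpw]
          _ = dt ≫ ψ1 ≫ p := by rw [hqr3]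
          _ = f ≫ p := by rw [← Category.assoc, hdt]
      have hθψ2 : θ ≫ ψ2 = r5 := by
        apply (cancel_epi q5).1
        rw [← Category.assoc, hθ, hdtψ2, hq5r5]
      have hc5θ : c5 ≫ θ = ι2 := by
        apply hpb2.hom_ext
        · rw [Category.assoc, hc5mI, hι2ψ1]
        · rw [Category.assoc, hθψ2, hι2ψ2, S.conf_comp hc5r5]
      haveI hθiso : IsIso θ := S.shortFive hc5r5 hι2c θ hc5θ hθψ2
      have hmIconf : S.conf (θ ≫ ψ1) (q3 ≫ ρ3) :=
        S.conf_iso (asIso θ).symm (Iso.refl _) (Iso.refl _) hψ1pD (by simp) (by simp)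
      refine ⟨Q5, q5, θ ≫ ψ1, ⟨_, _, hq5⟩, ⟨_, _, hmIconf⟩, ?_⟩
      rw [← Category.assoc, hθ, hdt]

end Helpers3

end ExactStruct
/-- If `E` is a length exact category which is not abelian
(with the standard exact structure), then there are simple objects `M, N` of
`E` and a morphism `M ⟶ N` which is neither zero nor an isomorphism. -/
theorem exists_nonzero_noniso_of_not_abelian {E : Type u} [Category.{v} E]
    [pe : Preadditive E] [HasZeroObject E] [HasBinaryBiproducts E]
    (S : ExactStruct E) (hl : S.IsLength)
    (hna : ¬ ∃ inst : Abelian E, inst.toPreadditive = pe ∧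
      ∀ ⦃X Y Z : E⦄ (f : X ⟶ Y) (g : Y ⟶ Z) (w : f ≫ g = 0),
        S.conf f g ↔ (ShortComplex.mk f g w).ShortExact) :
    ∃ (M N : E) (f : M ⟶ N), S.Simple M ∧ S.Simple N ∧ f ≠ 0 ∧ ¬ IsIso f := by
  by_contra hcon
  push_neg at hcon
  apply hna
  have H : ∀ ⦃M N : E⦄ (f : M ⟶ N), S.Simple M → S.Simple N → f ≠ 0 → IsIso f :=
    fun M N f hM hN hf => hcon M N f hM hN hf
  have hAdm : ∀ {X Y : E} (f : X ⟶ Y), ∃ (I : E) (dd : X ⟶ I) (m : I ⟶ Y),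
      S.Deflation dd ∧ S.Inflation m ∧ dd ≫ m = f := by
    intro X Y f
    obtain ⟨n, hY⟩ := hl Y
    exact S.admissible H hl hY f
  -- every mono is an inflation
  have hMonoInf : ∀ {X Y : E} (f : X ⟶ Y), Mono f →
      ∃ (Z' : E) (c' : Y ⟶ Z'), S.conf f c' := by
    intro X Y f hf
    obtain ⟨I, dd, m, ⟨K, k, hk⟩, ⟨Z', c', hc'⟩, hdm⟩ := hAdm f
    haveI : Mono (dd ≫ m) := by rw [hdm]; exact hf
    haveI hdmono : Mono dd := mono_of_mono dd m
    have hk0 : k = 0 := (cancel_mono dd).1 (by rw [S.conf_comp hk, zero_comp])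
    obtain ⟨s, hs⟩ := S.conf_desc hk (𝟙 X) (by rw [hk0, zero_comp])
    haveI hde : Epi dd := S.conf_epi' hk
    have hsd : s ≫ dd = 𝟙 I := by
      rw [← cancel_epi dd, ← Category.assoc, hs, Category.id_comp, Category.comp_id]
    refine ⟨Z', c', S.conf_iso (Iso.mk s dd hsd hs) (Iso.refl Y) (Iso.refl Z') hc' ?_ (by simp)⟩
    show m ≫ (Iso.refl Y).hom = s ≫ f
    rw [Iso.refl_hom, Category.comp_id, ← hdm, ← Category.assoc, hsd, Category.id_comp]
  -- every epi is a deflation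
  have hEpiDef : ∀ {X Y : E} (f : X ⟶ Y), Epi f →
      ∃ (K : E) (k : K ⟶ X), S.conf k f := by
    intro X Y f hf
    obtain ⟨I, dd, m, ⟨K, k, hk⟩, ⟨Z', c', hc'⟩, hdm⟩ := hAdm f
    haveI : Epi (dd ≫ m) := by rw [hdm]; exact hf
    haveI hmepi : Epi m := epi_of_epi dd m
    have hc0 : c' = 0 := (cancel_epi m).1 (by rw [S.conf_comp hc', comp_zero])
    obtain ⟨s, hs⟩ := S.conf_lift hc' (𝟙 Y) (by rw [hc0, comp_zero])
    haveI hmm : Mono m := S.conf_mono' hc'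
    have hms : m ≫ s = 𝟙 I := by
      rw [← cancel_mono m, Category.assoc, hs, Category.comp_id, Category.id_comp]
    refine ⟨K, k, S.conf_iso (Iso.refl K) (Iso.refl X) (Iso.mk m s hms hs) hk (by simp) ?_⟩
    show dd ≫ m = (Iso.refl X).hom ≫ f
    rw [Iso.refl_hom, Category.id_comp, hdm]
  haveI hHasKernels : HasKernels E := by
    constructor
    intro X Y f
    obtain ⟨I, dd, m, ⟨K, k, hk⟩, ⟨Z', c', hc'⟩, hdm⟩ := hAdm f
    haveI hmm : Mono m := S.conf_mono' hc'
    have hkf : k ≫ f = 0 := by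
      rw [← hdm, ← Category.assoc, S.conf_comp hk, zero_comp]
    have hfac : ∀ {A : E} (t : A ⟶ X), t ≫ f = 0 → ∃ l, l ≫ k = t := by
      intro A t ht
      have htd : t ≫ dd = 0 := by
        apply (cancel_mono m).1
        rw [Category.assoc, hdm, ht, zero_comp]
      exact S.conf_lift hk t htd
    haveI : Mono k := S.conf_mono' hk
    exact HasLimit.mk ⟨_, KernelFork.IsLimit.ofι' k hkf
      (fun t ht => ⟨(hfac t ht).choose, (hfac t ht).choose_spec⟩)⟩
  haveI hHasCokernels : HasCokernels E := by
    constructor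
    intro X Y f
    obtain ⟨I, dd, m, ⟨K, k, hk⟩, ⟨Z', c', hc'⟩, hdm⟩ := hAdm f
    haveI hde : Epi dd := S.conf_epi' hk
    have hfc : f ≫ c' = 0 := by
      rw [← hdm, Category.assoc, S.conf_comp hc', comp_zero]
    have hfac : ∀ {A : E} (t : Y ⟶ A), f ≫ t = 0 → ∃ l, c' ≫ l = t := by
      intro A t ht
      have htm : m ≫ t = 0 := by
        apply (cancel_epi dd).1
        rw [← Category.assoc, hdm, ht, comp_zero]
      exact S.conf_desc hc' t htm
    haveI : Epi c' := S.conf_epi' hc'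
    exact HasColimit.mk ⟨_, CokernelCofork.IsColimit.ofπ' c' hfc
      (fun t ht => ⟨(hfac t ht).choose, (hfac t ht).choose_spec⟩)⟩
  haveI : IsNormalMonoCategory E := by
    constructor
    intro X Y f hf
    have hex := hMonoInf f hf
    exact Nonempty.intro { Z := hex.choose, g := hex.choose_spec.choose,
                           w := S.conf_comp hex.choose_spec.choose_spec,
                           isLimit := (S.conf_isKernel hex.choose_spec.choose_spec).some }
  haveI : IsNormalEpiCategory E := by
    constructor
    intro X Y f hf
    have hex := hEpiDef f hf
    exact Nonempty.intro { W := hex.choose, g := hex.choose_spec.choose,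
                           w := S.conf_comp hex.choose_spec.choose_spec,
                           isColimit := (S.conf_isCokernel hex.choose_spec.choose_spec).some }
  haveI : HasFiniteProducts E := hasFiniteProducts_of_has_binary_and_terminal
  letI myAb : Abelian E :=
    { toPreadditive := pe
      toIsNormalMonoCategory := inferInstance
      toIsNormalEpiCategory := inferInstance }
  refine ⟨myAb, rfl, ?_⟩
  intro X Y Z f g w
  constructor
  · intro hc
    haveI : Mono f := S.conf_mono' hc
    haveI : Epi g := S.conf_epi' hc
    exact { exact := ShortComplex.exact_of_f_is_kernel _ (S.conf_isKernel hc).some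
            mono_f := ‹_›
            epi_g := ‹_› }
  · intro hse
    haveI := hse.mono_f
    haveI := hse.epi_g
    obtain ⟨K, k, hk⟩ := hEpiDef g hse.epi_g
    refine S.conf_swap_kernel hk f w ?_ ?_
    · intro A x hx
      exact (cancel_mono f).1 (by rw [hx, zero_comp])
    · intro A t ht
      obtain ⟨l, hl⟩ := KernelFork.IsLimit.lift' hse.fIsKernel t ht
      exact ⟨l, by simpa using hl⟩
end

section
/- Let W be a wide subcategory of an exact category E. Then the exact structure that W inherits from E coincides with the standard (abelian) exact structure on W; in particular, kernels and cokernels computed in W of any morphism in W agree with the kernel and cokernel of its admissible factorization in E. -/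
open CategoryTheory CategoryTheory.Limits

universe v u

/-! An admissible factorization `φ = ι ∘ π` computes kernels and cokernels in `E`: the kernel of
the deflation `π` stays a kernel after composing with the monomorphism `ι`, dually for the
cokernel of `ι`. A fully faithful functor reflects kernels and cokernels, so this descends to
`W`; likewise a conflation with terms in `W` is a kernel-cokernel pair in `W`, i.e. a short exact
sequence, and conversely short exact sequences of `W` are conflations because the inclusion is
exact. -/

namespace CategoryTheory.Limits

variable {C : Type*} [Category* C] [HasZeroMorphisms C]
  {D : Type*} [Category* D] [HasZeroMorphisms D]
  (G : C ⥤ D) [G.PreservesZeroMorphisms] {X Y Z : C}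

noncomputable def KernelFork.isLimitOfIsLimitMap {f : X ⟶ Y}
    [ReflectsLimit (parallelPair f 0) G]
    {h : Z ⟶ X} (w : h ≫ f = 0)
    (l : IsLimit (KernelFork.ofι (G.map h) (by simp only [← G.map_comp, w, Functor.map_zero]) :
      Fork (G.map f) 0)) :
    IsLimit (KernelFork.ofι h w) :=
  isLimitOfReflects G ((isLimitMapConeForkEquiv' G w).symm l)

noncomputable def CokernelCofork.isColimitOfIsColimitMap {f : X ⟶ Y}
    [ReflectsColimit (parallelPair f 0) G]
    {h : Y ⟶ Z} (w : f ≫ h = 0)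
    (l : IsColimit (CokernelCofork.ofπ (G.map h)
      (by simp only [← G.map_comp, w, Functor.map_zero]) : Cofork (G.map f) 0)) :
    IsColimit (CokernelCofork.ofπ h w) :=
  isColimitOfReflects G ((isColimitMapCoconeCoforkEquiv' G w).symm l)

end CategoryTheory.Limits

namespace ExactStruct

variable {E : Type u} [Category.{v} E] [HasZeroMorphisms E]

theorem Inflation.mono {S : ExactStruct E} {X Y : E} {f : X ⟶ Y} (hf : S.Inflation f) :
    Mono f :=
  let ⟨_, _, hc⟩ := hf
  mono_of_isLimit_fork (S.conf_isKernel hc).some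

theorem Deflation.epi {S : ExactStruct E} {Y Z : E} {g : Y ⟶ Z} (hg : S.Deflation g) :
    Epi g :=
  let ⟨_, _, hc⟩ := hg
  epi_of_isColimit_cofork (S.conf_isCokernel hc).some

variable (S : ExactStruct E) {C : Type*} [Category* C] (G : C ⥤ E) [G.Full] [G.Faithful]

theorem shortExact_of_conf_map [Abelian C] {X Y Z : C} {f : X ⟶ Y} {g : Y ⟶ Z} (w : f ≫ g = 0) (hc : S.conf (G.map f) (G.map g)) :
    (ShortComplex.mk f g w).ShortExact := by
  have hf : IsLimit (KernelFork.ofι f w) :=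
    KernelFork.isLimitOfIsLimitMap G w (S.conf_isKernel hc).some
  have hg : IsColimit (CokernelCofork.ofπ g w) :=
    CokernelCofork.isColimitOfIsColimitMap G w (S.conf_isCokernel hc).some
  exact .mk' (ShortComplex.exact_of_f_is_kernel _ hf) (mono_of_isLimit_fork hf)
    (epi_of_isColimit_cofork hg)

variable [HasZeroMorphisms C] {A B : C} {φ : A ⟶ B} {M : E} {π : G.obj A ⟶ M} {ι : M ⟶ G.obj B}

theorem exists_isLimit_kernelFork_of_conf_of_inflation {K : C} {k : K ⟶ A}
    (hkπ : S.conf (G.map k) π) (hι : S.Inflation ι) (hφ : π ≫ ι = G.map φ) :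
    ∃ w : k ≫ φ = 0, Nonempty (IsLimit (KernelFork.ofι k w)) := by
  have := hι.mono
  have w : k ≫ φ = 0 := G.map_injective <| by
    rw [G.map_comp, ← hφ, reassoc_of% S.conf_comp hkπ, zero_comp, G.map_zero]
  exact ⟨w, ⟨KernelFork.isLimitOfIsLimitMap G w
    (isKernelCompMono (S.conf_isKernel hkπ).some ι hφ.symm)⟩⟩

theorem exists_isColimit_cokernelCofork_of_conf_of_deflation {Q : C} {c : B ⟶ Q}
    (hιc : S.conf ι (G.map c)) (hπ : S.Deflation π) (hφ : π ≫ ι = G.map φ) :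
    ∃ w : φ ≫ c = 0, Nonempty (IsColimit (CokernelCofork.ofπ c w)) := by
  have := hπ.epi
  have w : φ ≫ c = 0 := G.map_injective <| by
    rw [G.map_comp, ← hφ, Category.assoc, S.conf_comp hιc, comp_zero, G.map_zero]
  exact ⟨w, ⟨CokernelCofork.isColimitOfIsColimitMap G w
    (isCokernelEpiComp (S.conf_isCokernel hιc).some π hφ.symm)⟩⟩

end ExactStruct

theorem wide_inherited_is_standard_general {E : Type u} [Category.{v} E] [Preadditive E]
    (S : ExactStruct E) (W : Set E)
    [inst : Abelian (ObjectProperty.FullSubcategory fun X => X ∈ W)]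
    (hincl : S.InclusionExact W) :
    (∀ (A B C : ObjectProperty.FullSubcategory fun X => X ∈ W) (f : A ⟶ B) (g : B ⟶ C)
        (w : f ≫ g = 0),
      S.conf f.hom g.hom ↔ (ShortComplex.mk f g w).ShortExact) ∧
    (∀ (A B : ObjectProperty.FullSubcategory fun X => X ∈ W) (φ : A ⟶ B)
        (M : E) (π : A.obj ⟶ M) (ι : M ⟶ B.obj)
        (_ : M ∈ W) (_ : S.Deflation π) (_ : S.Inflation ι) (_ : π ≫ ι = φ.hom)
        (K : E) (k : K ⟶ A.obj) (_ : S.conf k π) (hK : K ∈ W)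
        (Q : E) (c : B.obj ⟶ Q) (_ : S.conf ι c) (hQ : Q ∈ W),
      (∃ w₁ : (show (⟨K, hK⟩ : ObjectProperty.FullSubcategory fun X => X ∈ W) ⟶ A from ObjectProperty.homMk k) ≫ φ = 0,
        Nonempty (IsLimit (KernelFork.ofι
          (show (⟨K, hK⟩ : ObjectProperty.FullSubcategory fun X => X ∈ W) ⟶ A from ObjectProperty.homMk k) w₁))) ∧
      (∃ w₂ : φ ≫ (show B ⟶ (⟨Q, hQ⟩ : ObjectProperty.FullSubcategory fun X => X ∈ W) from ObjectProperty.homMk c) = 0,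
        Nonempty (IsColimit (CokernelCofork.ofπ
          (show B ⟶ (⟨Q, hQ⟩ : ObjectProperty.FullSubcategory fun X => X ∈ W) from ObjectProperty.homMk c) w₂)))) := by
  let G := ObjectProperty.ι fun X => X ∈ W
  refine ⟨fun A B C f g w => ⟨fun hc => ?_, hincl A B C f g w⟩, ?_⟩
  · -- `W` has zero morphisms inherited from `E` and from its abelian structure; they agree
    -- since `HasZeroMorphisms` is a subsingleton.
    convert S.shortExact_of_conf_map G (by convert w; exact Subsingleton.elim _ _) hc
    exact Subsingleton.elim _ _
  intro A B φ M π ι _ hπ hι hφ K k hkπ hK Q c hιc hQ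
  exact ⟨S.exists_isLimit_kernelFork_of_conf_of_inflation G (K := ⟨K, hK⟩)
      (k := ObjectProperty.homMk k) hkπ hι hφ,
    S.exists_isColimit_cokernelCofork_of_conf_of_deflation G (Q := ⟨Q, hQ⟩)
      (c := ObjectProperty.homMk c) hιc hπ hφ⟩

/-- For a wide subcategory `W` of `E`, the inherited exact
structure coincides with the standard abelian exact structure on `W`:
conflations of `E` with all terms in `W` are exactly the short exact sequences
of `W`; moreover for any morphism `φ` of `W` with admissible factorization
`φ = ι ∘ π` in `E`, the kernel of the deflation `π` is a kernel of `φ` in `W`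
and the cokernel of the inflation `ι` is a cokernel of `φ` in `W`. -/
theorem wide_inherited_is_standard {E : Type u} [Category.{v} E] [Preadditive E]
    [HasZeroObject E] [HasBinaryBiproducts E] (S : ExactStruct E) (W : Set E)
    (hW : S.IsWide W) [inst : Abelian (ObjectProperty.FullSubcategory fun X => X ∈ W)]
    (hincl : S.InclusionExact W) :
    (∀ (A B C : ObjectProperty.FullSubcategory fun X => X ∈ W) (f : A ⟶ B) (g : B ⟶ C)
        (w : f ≫ g = 0),
      S.conf f.hom g.hom ↔ (ShortComplex.mk f g w).ShortExact) ∧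
    (∀ (A B : ObjectProperty.FullSubcategory fun X => X ∈ W) (φ : A ⟶ B)
        (M : E) (π : A.obj ⟶ M) (ι : M ⟶ B.obj)
        (_ : M ∈ W) (_ : S.Deflation π) (_ : S.Inflation ι) (_ : π ≫ ι = φ.hom)
        (K : E) (k : K ⟶ A.obj) (_ : S.conf k π) (hK : K ∈ W)
        (Q : E) (c : B.obj ⟶ Q) (_ : S.conf ι c) (hQ : Q ∈ W),
      (∃ w₁ : (show (⟨K, hK⟩ : ObjectProperty.FullSubcategory fun X => X ∈ W) ⟶ A from ObjectProperty.homMk k) ≫ φ = 0,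
        Nonempty (IsLimit (KernelFork.ofι
          (show (⟨K, hK⟩ : ObjectProperty.FullSubcategory fun X => X ∈ W) ⟶ A from ObjectProperty.homMk k) w₁))) ∧
      (∃ w₂ : φ ≫ (show B ⟶ (⟨Q, hQ⟩ : ObjectProperty.FullSubcategory fun X => X ∈ W) from ObjectProperty.homMk c) = 0,
        Nonempty (IsColimit (CokernelCofork.ofπ
          (show B ⟶ (⟨Q, hQ⟩ : ObjectProperty.FullSubcategory fun X => X ∈ W) from ObjectProperty.homMk c) w₂)))) :=
  wide_inherited_is_standard_general S W (inst := inst) hincl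
end
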